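/- arXiv:1803.08453 — 7 statements merged into one kernel-verified Lean document; each statement's English description precedes it below -/
import Mathlib

section
/- Every convex σ-effect algebra is Archimedean: if (1/2)a ≤ (1/2)(b + (1/n)·1) for all positive integers n, then a ≤ b. -/
/-- `x ≤ y` for a partially defined addition: there is `c` with `x + c` defined and `x + c = y`. -/
def pLe {E : Type*} (D : E → E → Prop) (add : E → E → E) (x y : E) : Prop :=
  ∃ c, D x c ∧ add x c = y

/-- An effect algebra: a partially defined commutative associative addition with zero,
the zero-one law and unique complements. `D a b` means "`a + b` is defined". -/
structure EffectAlgebra (E : Type*) where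
  D : E → E → Prop
  add : E → E → E
  zero : E
  one : E
  compl : E → E
  D_comm : ∀ {a b}, D a b → D b a
  add_comm' : ∀ {a b}, D a b → add a b = add b a
  D_assoc_left : ∀ {a b c}, D b c → D a (add b c) → D a b
  D_assoc : ∀ {a b c}, D b c → D a (add b c) → D (add a b) c
  add_assoc' : ∀ {a b c}, D b c → D a (add b c) → add a (add b c) = add (add a b) c
  D_zero : ∀ a, D a zero
  add_zero' : ∀ a, add a zero = a
  zero_one : ∀ {a}, D a one → a = zero
  D_compl : ∀ a, D a (compl a)
  add_compl : ∀ a, add a (compl a) = one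
  compl_unique : ∀ {a b}, D a b → add a b = one → b = compl a

namespace EffectAlgebra
variable {E : Type*} (EA : EffectAlgebra E)
/-- The canonical order of an effect algebra. -/
def le (a b : E) : Prop := pLe EA.D EA.add a b
end EffectAlgebra

/-- A convex σ-effect algebra: an effect algebra with a `[0,1]`-action (convex structure)
in which every decreasing sequence has an infimum. -/
structure ConvexSigmaEA (E : Type*) extends EffectAlgebra E where
  smul : ℝ → E → E
  smul_D : ∀ {r s : ℝ} (a : E), 0 ≤ r → 0 ≤ s → r + s ≤ 1 → D (smul r a) (smul s a)
  smul_add_dist : ∀ {r s : ℝ} (a : E), 0 ≤ r → 0 ≤ s → r + s ≤ 1 →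
    smul (r + s) a = add (smul r a) (smul s a)
  smul_mul : ∀ {r s : ℝ} (a : E), 0 ≤ r → r ≤ 1 → 0 ≤ s → s ≤ 1 →
    smul (r * s) a = smul r (smul s a)
  zero_smul : ∀ a, smul 0 a = zero
  one_smul : ∀ a, smul 1 a = a
  smul_D_add : ∀ {r : ℝ} {a b : E}, 0 ≤ r → r ≤ 1 → D a b → D (smul r a) (smul r b)
  smul_add : ∀ {r : ℝ} {a b : E}, 0 ≤ r → r ≤ 1 → D a b →
    smul r (add a b) = add (smul r a) (smul r b)
  inf_exists : ∀ f : ℕ → E, (∀ n, pLe D add (f (n + 1)) (f n)) →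
    ∃ m, (∀ n, pLe D add m (f n)) ∧ ∀ x, (∀ n, pLe D add x (f n)) → pLe D add x m

namespace EffectAlgebra
variable {E : Type*} {EA : EffectAlgebra E}

theorem le_refl' (a : E) : EA.le a a :=
  ⟨EA.zero, EA.D_zero a, EA.add_zero' a⟩

theorem D_right {a b c : E} (hbc : EA.D b c) (h : EA.D a (EA.add b c)) : EA.D a c :=
  EA.D_assoc_left (EA.D_comm hbc) (EA.add_comm' hbc ▸ h)

theorem assoc_left {a b c : E} (hab : EA.D a b) (h : EA.D (EA.add a b) c) :
    EA.D b c ∧ EA.D a (EA.add b c) ∧ EA.add (EA.add a b) c = EA.add a (EA.add b c) := by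
  have hba := EA.D_comm hab
  have hc : EA.D c (EA.add b a) := by rw [← EA.add_comm' hab]; exact EA.D_comm h
  have hcb : EA.D c b := EA.D_assoc_left hba hc
  have h1 : EA.D (EA.add c b) a := EA.D_assoc hba hc
  have e1 : EA.add c (EA.add b a) = EA.add (EA.add c b) a := EA.add_assoc' hba hc
  have hbc := EA.D_comm hcb
  have h2 : EA.D a (EA.add b c) := by
    have h3 := EA.D_comm h1
    rwa [EA.add_comm' hcb] at h3
  refine ⟨hbc, h2, ?_⟩
  calc EA.add (EA.add a b) c = EA.add c (EA.add a b) := EA.add_comm' h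
    _ = EA.add c (EA.add b a) := by rw [EA.add_comm' hab]
    _ = EA.add (EA.add c b) a := e1
    _ = EA.add a (EA.add c b) := EA.add_comm' h1
    _ = EA.add a (EA.add b c) := by rw [EA.add_comm' hcb]

theorem compl_compl' (a : E) : EA.compl (EA.compl a) = a :=
  (EA.compl_unique (EA.D_comm (EA.D_compl a))
    (by rw [EA.add_comm' (EA.D_comm (EA.D_compl a)), EA.add_compl])).symm

theorem add_cancel {a u v : E} (hu : EA.D a u) (hv : EA.D a v)
    (h : EA.add a u = EA.add a v) : u = v := by
  set w := EA.compl (EA.add a u) with hwdef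
  have he : EA.add (EA.add a u) w = EA.one := EA.add_compl _
  have hw' : EA.D (EA.add u a) w := by
    rw [← EA.add_comm' hu]; exact EA.D_compl _
  obtain ⟨haw, h2, e⟩ := assoc_left (EA.D_comm hu) hw'
  have e1 : EA.add u (EA.add a w) = EA.one := by
    rw [← e, ← EA.add_comm' hu]; exact he
  have hcu := EA.compl_unique h2 e1
  have hw2 : EA.D (EA.add v a) w := by
    rw [← EA.add_comm' hv, ← h]; exact EA.D_compl _
  obtain ⟨_, h2', e'⟩ := assoc_left (EA.D_comm hv) hw2
  have e2 : EA.add v (EA.add a w) = EA.one := by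
    rw [← e', ← EA.add_comm' hv, ← h]; exact he
  have hcv := EA.compl_unique h2' e2
  have : EA.compl u = EA.compl v := by rw [← hcu, ← hcv]
  calc u = EA.compl (EA.compl u) := (compl_compl' u).symm
    _ = EA.compl (EA.compl v) := by rw [this]
    _ = v := compl_compl' v

theorem le_trans' {a b c : E} (h1 : EA.le a b) (h2 : EA.le b c) : EA.le a c := by
  obtain ⟨x, hx, rfl⟩ := h1
  obtain ⟨y, hy, rfl⟩ := h2
  obtain ⟨hxy, h3, e⟩ := assoc_left hx hy
  exact ⟨EA.add x y, h3, e.symm⟩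

theorem le_add_right {x u v : E} (h : EA.le x u) (hv : EA.D u v) :
    EA.D x v ∧ EA.le (EA.add x v) (EA.add u v) := by
  obtain ⟨t, ht, rfl⟩ := h
  obtain ⟨htv, hx2, e⟩ := assoc_left ht hv
  have hvt := EA.D_comm htv
  have hx3 : EA.D x (EA.add v t) := by rwa [EA.add_comm' htv] at hx2
  have h4 : EA.D (EA.add x v) t := EA.D_assoc hvt hx3
  have e2 : EA.add x (EA.add v t) = EA.add (EA.add x v) t := EA.add_assoc' hvt hx3
  have hxv : EA.D x v := EA.D_assoc_left hvt hx3
  refine ⟨hxv, t, h4, ?_⟩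
  rw [← e2, ← EA.add_comm' htv, ← e]

theorem add_le_add' {x y u v : E} (hx : EA.le x u) (hy : EA.le y v) (huv : EA.D u v) :
    EA.D x y ∧ EA.le (EA.add x y) (EA.add u v) := by
  obtain ⟨hxv, h1⟩ := le_add_right hx huv
  obtain ⟨hyx, h2⟩ := le_add_right hy (EA.D_comm hxv)
  have hxy := EA.D_comm hyx
  refine ⟨hxy, le_trans' ?_ h1⟩
  rw [EA.add_comm' hxy, EA.add_comm' hxv]
  exact h2

theorem le_cancel_left {a u v : E} (hu : EA.D a u) (hv : EA.D a v)
    (h : EA.le (EA.add a u) (EA.add a v)) : EA.le u v := by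
  obtain ⟨t, ht, e⟩ := h
  obtain ⟨hut, h2, e2⟩ := assoc_left hu ht
  exact ⟨t, hut, add_cancel h2 hv (by rw [← e2, e])⟩

theorem eq_zero_of_le_zero {a : E} (h : EA.le a EA.zero) : a = EA.zero := by
  obtain ⟨c, hc, e⟩ := h
  have h1 : EA.D (EA.add a c) EA.one := by
    rw [e]; exact EA.D_comm (EA.D_zero _)
  obtain ⟨hc1, _, _⟩ := assoc_left hc h1
  have hc0 : c = EA.zero := EA.zero_one hc1
  rw [hc0, EA.add_zero'] at e
  exact e

theorem le_compl_of_D {x y : E} (h : EA.D x y) : EA.le x (EA.compl y) := by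
  have hw : EA.D (EA.add y x) (EA.compl (EA.add x y)) := by
    rw [← EA.add_comm' h]; exact EA.D_compl _
  obtain ⟨hxw, h2, e⟩ := assoc_left (EA.D_comm h) hw
  have e1 : EA.add y (EA.add x (EA.compl (EA.add x y))) = EA.one := by
    rw [← e, ← EA.add_comm' h]; exact EA.add_compl _
  exact ⟨_, hxw, EA.compl_unique h2 e1⟩

theorem D_of_le_compl {x y : E} (h : EA.le x (EA.compl y)) : EA.D x y := by
  obtain ⟨c, hc, e⟩ := h
  have h1 : EA.D y (EA.compl y) := EA.D_compl y
  rw [← e] at h1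
  exact EA.D_comm (EA.D_assoc_left hc h1)

theorem compl_le_compl' {x y : E} (h : EA.le x y) : EA.le (EA.compl y) (EA.compl x) := by
  obtain ⟨c, hc, rfl⟩ := h
  have h1 : EA.D (EA.add x c) (EA.compl (EA.add x c)) := EA.D_compl _
  obtain ⟨hcw, h2, e⟩ := assoc_left hc h1
  have e1 : EA.add x (EA.add c (EA.compl (EA.add x c))) = EA.one := by
    rw [← e]; exact EA.add_compl _
  have e2 := EA.compl_unique h2 e1
  refine ⟨c, EA.D_comm hcw, ?_⟩
  rw [EA.add_comm' (EA.D_comm hcw)]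
  exact e2

theorem add_add_add' {a b c d : E} (hab : EA.D a b) (hcd : EA.D c d)
    (h : EA.D (EA.add a b) (EA.add c d)) :
    EA.D a c ∧ EA.D b d ∧ EA.D (EA.add a c) (EA.add b d) ∧
      EA.add (EA.add a b) (EA.add c d) = EA.add (EA.add a c) (EA.add b d) := by
  obtain ⟨hb_cd, ha_bcd, e1⟩ := assoc_left hab h
  have h2 : EA.D (EA.add b c) d := EA.D_assoc hcd hb_cd
  have e2 : EA.add b (EA.add c d) = EA.add (EA.add b c) d := EA.add_assoc' hcd hb_cd
  have hbc : EA.D b c := EA.D_assoc_left hcd hb_cd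
  have hcb := EA.D_comm hbc
  have h3 : EA.D (EA.add c b) d := by rwa [← EA.add_comm' hbc]
  obtain ⟨hbd, hc_bd, e3⟩ := assoc_left hcb h3
  have e4 : EA.add b (EA.add c d) = EA.add c (EA.add b d) := by
    rw [e2, EA.add_comm' hbc, e3]
  have ha' : EA.D a (EA.add c (EA.add b d)) := by rwa [e4] at ha_bcd
  have hfin : EA.D (EA.add a c) (EA.add b d) := EA.D_assoc hc_bd ha'
  have e5 : EA.add a (EA.add c (EA.add b d)) = EA.add (EA.add a c) (EA.add b d) :=
    EA.add_assoc' hc_bd ha'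
  exact ⟨EA.D_assoc_left hc_bd ha', hbd, hfin, by rw [e1, e4, e5]⟩

end EffectAlgebra

section Convex
variable {E : Type*}

/-- Iterated sum `k·d` (as an element; definedness shown separately). -/
def nmulEA (EA : EffectAlgebra E) (d : E) : ℕ → E
  | 0 => EA.zero
  | (k+1) => EA.add (nmulEA EA d k) d

theorem half_half (EA : ConvexSigmaEA E) (x : E) :
    EA.D (EA.smul (1/2) x) (EA.smul (1/2) x) ∧
      EA.add (EA.smul (1/2) x) (EA.smul (1/2) x) = x := by
  have h0 : (0:ℝ) ≤ 1/2 := by norm_num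
  have h1 : (1:ℝ)/2 + 1/2 ≤ 1 := by norm_num
  have hD := EA.smul_D (r := 1/2) (s := 1/2) x h0 h0 h1
  have e := EA.smul_add_dist (r := 1/2) (s := 1/2) x h0 h0 h1
  rw [show (1:ℝ)/2 + 1/2 = 1 by norm_num, EA.one_smul] at e
  exact ⟨hD, e.symm⟩

theorem half_le_cancel (EA : ConvexSigmaEA E) {x y : E}
    (h : EA.le (EA.smul (1/2) x) (EA.smul (1/2) y)) : EA.le x y := by
  obtain ⟨hDx, ex⟩ := half_half EA x
  obtain ⟨hDy, ey⟩ := half_half EA y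
  obtain ⟨c, hc, ec⟩ := h
  have hD2 : EA.D (EA.add (EA.smul (1/2) x) c) (EA.add (EA.smul (1/2) x) c) := by
    rw [ec]; exact hDy
  obtain ⟨_, _, hres, e⟩ := EffectAlgebra.add_add_add' hc hc hD2
  refine ⟨EA.add c c, ?_, ?_⟩
  · rw [← ex]; exact hres
  · rw [← ex, ← e, ec, ey]

theorem smul_le_smul_one (EA : ConvexSigmaEA E) {r s : ℝ} (h0 : 0 ≤ r) (hrs : r ≤ s)
    (hs : s ≤ 1) (a : E) : EA.le (EA.smul r a) (EA.smul s a) := by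
  have e := EA.smul_add_dist (r := r) (s := s - r) a h0 (by linarith) (by linarith)
  have hr : r + (s - r) = s := by ring
  rw [hr] at e
  exact ⟨EA.smul (s - r) a, EA.smul_D a h0 (by linarith) (by linarith), e.symm⟩

theorem nmul_le (EA : ConvexSigmaEA E) {d : E}
    (hd : ∀ n : ℕ, EA.le d (EA.smul (1/(2*(n+1))) EA.one)) (n : ℕ) :
    ∀ j ≤ n, EA.le (nmulEA EA.toEffectAlgebra d j) (EA.smul ((j:ℝ)/(2*(n+1))) EA.one) := by
  have hnpos : (0:ℝ) < 2*((n:ℝ)+1) := by positivity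
  intro j
  induction j with
  | zero =>
    intro _
    rw [show ((0:ℕ):ℝ)/(2*((n:ℝ)+1)) = 0 by norm_num, EA.zero_smul]
    exact EffectAlgebra.le_refl' _
  | succ j ih =>
    intro hj
    have hjn : (j:ℝ) ≤ (n:ℝ) := by exact_mod_cast Nat.le_of_succ_le hj
    have h1 := ih (Nat.le_of_succ_le hj)
    have h2 := hd n
    have hp1 : (0:ℝ) ≤ (j:ℝ)/(2*((n:ℝ)+1)) := by positivity
    have hp2 : (0:ℝ) ≤ 1/(2*((n:ℝ)+1)) := by positivity
    have hsum : (j:ℝ)/(2*((n:ℝ)+1)) + 1/(2*((n:ℝ)+1)) = ((j:ℝ)+1)/(2*((n:ℝ)+1)) := by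
      rw [← add_div]
    have hle1 : ((j:ℝ)+1)/(2*((n:ℝ)+1)) ≤ 1 := by
      rw [div_le_one hnpos]; linarith
    have hD : EA.D (EA.smul ((j:ℝ)/(2*((n:ℝ)+1))) EA.one)
        (EA.smul (1/(2*((n:ℝ)+1))) EA.one) :=
      EA.smul_D EA.one hp1 hp2 (by rw [hsum]; exact hle1)
    obtain ⟨hDd, hle⟩ := EffectAlgebra.add_le_add' h1 h2 hD
    have e := EA.smul_add_dist (r := (j:ℝ)/(2*((n:ℝ)+1))) (s := 1/(2*((n:ℝ)+1)))
      EA.one hp1 hp2 (by rw [hsum]; exact hle1)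
    rw [hsum] at e
    show EA.le (EA.add (nmulEA EA.toEffectAlgebra d j) d)
      (EA.smul (((j:ℕ)+1:ℕ) / (2*((n:ℝ)+1))) EA.one)
    push_cast
    rw [e]
    exact hle

theorem nmul_D (EA : ConvexSigmaEA E) {d : E}
    (hd : ∀ n : ℕ, EA.le d (EA.smul (1/(2*(n+1))) EA.one)) (k : ℕ) :
    EA.D (nmulEA EA.toEffectAlgebra d k) d := by
  have hkpos : (0:ℝ) < 2*((k:ℝ)+1) := by positivity
  have h1 := nmul_le EA hd k k le_rfl
  have h2 := hd k
  have hp1 : (0:ℝ) ≤ (k:ℝ)/(2*((k:ℝ)+1)) := by positivity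
  have hp2 : (0:ℝ) ≤ 1/(2*((k:ℝ)+1)) := by positivity
  have hsum : (k:ℝ)/(2*((k:ℝ)+1)) + 1/(2*((k:ℝ)+1)) ≤ 1 := by
    rw [← add_div, div_le_one hkpos]; linarith
  have hD := EA.smul_D EA.one hp1 hp2 hsum
  exact (EffectAlgebra.add_le_add' h1 h2 hD).1

theorem eq_zero_of_forall_le (EA : ConvexSigmaEA E) {d : E}
    (hd : ∀ n : ℕ, EA.le d (EA.smul (1/(2*(n+1))) EA.one)) : d = EA.zero := by
  set N := nmulEA EA.toEffectAlgebra d with hN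
  have hND : ∀ k, EA.D (N k) d := nmul_D EA hd
  have hdec : ∀ k, pLe EA.D EA.add (EA.compl (N (k+1))) (EA.compl (N k)) := fun k =>
    EffectAlgebra.compl_le_compl' ⟨d, hND k, rfl⟩
  obtain ⟨t, ht, hgr⟩ := EA.inf_exists (fun k => EA.compl (N k)) hdec
  have htk : ∀ k, EA.D t (N k) := fun k => EffectAlgebra.D_of_le_compl (ht k)
  have htd : EA.D t d := EffectAlgebra.D_right (hND 0) (htk 1)
  have hlow : ∀ k, pLe EA.D EA.add (EA.add t d) (EA.compl (N k)) := by
    intro k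
    apply EffectAlgebra.le_compl_of_D
    have h1 : EA.D t (EA.add (N k) d) := htk (k+1)
    have h2 : EA.D t (EA.add d (N k)) := by rwa [EA.add_comm' (hND k)] at h1
    exact EA.D_assoc (EA.D_comm (hND k)) h2
  have hle := hgr _ hlow
  have hd0 : EA.le d EA.zero := by
    apply EffectAlgebra.le_cancel_left htd (EA.D_zero t)
    rwa [EA.add_zero']
  exact EffectAlgebra.eq_zero_of_le_zero hd0

end Convex

/-- Every convex σ-effect algebra is Archimedean: if `(1/2)a ≤ (1/2)b + (1/(2n))·1`
for all positive integers `n`, then `a ≤ b`. -/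
theorem convexSigmaEA_archimedean {E : Type*} (EA : ConvexSigmaEA E) (a b : E)
    (h : ∀ n : ℕ, EA.D (EA.smul (1/2) b) (EA.smul (1/(2*(n+1))) EA.one) ∧
      EA.le (EA.smul (1/2) a)
        (EA.add (EA.smul (1/2) b) (EA.smul (1/(2*(n+1))) EA.one))) :
    EA.le a b := by
  set g : ℕ → E := fun n => EA.add (EA.smul (1/2) b) (EA.smul (1/(2*(n+1))) EA.one) with hg
  have hgdec : ∀ n, pLe EA.D EA.add (g (n+1)) (g n) := by
    intro n
    have hpos : (0:ℝ) < 2*((n:ℝ)+1) := by positivity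
    have hss : EA.le (EA.smul (1/(2*((n:ℝ)+1+1))) EA.one) (EA.smul (1/(2*((n:ℝ)+1))) EA.one) := by
      apply smul_le_smul_one EA (by positivity) ?_ ?_ EA.one
      · apply div_le_div_of_nonneg_left (by norm_num) hpos (by linarith)
      · rw [div_le_one hpos]; linarith [Nat.cast_nonneg (α := ℝ) n]
    have hD := (h n).1
    have := (EffectAlgebra.add_le_add' (EffectAlgebra.le_refl' (EA.smul (1/2) b)) hss hD).2
    simpa [hg, EffectAlgebra.le] using this
  obtain ⟨m, hm, hgr⟩ := EA.inf_exists g hgdec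
  have ham : EA.le (EA.smul (1/2) a) m := hgr _ (fun n => (h n).2)
  have hbm : EA.le (EA.smul (1/2) b) m := hgr _ (fun n => ⟨_, (h n).1, rfl⟩)
  obtain ⟨d, hDd, hmd⟩ := hbm
  have hdle : ∀ n : ℕ, EA.le d (EA.smul (1/(2*(n+1))) EA.one) := by
    intro n
    apply EffectAlgebra.le_cancel_left hDd (h n).1
    rw [hmd]
    exact hm n
  have hd0 : d = EA.zero := eq_zero_of_forall_le EA hdle
  rw [hd0, EA.add_zero'] at hmd
  rw [← hmd] at ham
  exact half_le_cancel EA ham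
end

section
/- In a sequential effect space (convex σ-sequential effect algebra), for all a, b and λ ∈ [0,1]: (λa) ∘ b = a ∘ (λb) = λ(a ∘ b); moreover, if a ∘ b = b ∘ a then a ∘ (λb) = (λb) ∘ a. -/
/-- A sequential effect algebra (Gudder–Greechie): an effect algebra with a total
binary operation `seq` (the sequential product) satisfying the five axioms. -/
structure SEA (E : Type*) extends EffectAlgebra E where
  seq : E → E → E
  seq_D : ∀ {b c} (a : E), D b c → D (seq a b) (seq a c)
  seq_add : ∀ {b c} (a : E), D b c → seq a (add b c) = add (seq a b) (seq a c)
  one_seq : ∀ a, seq one a = a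
  seq_orth : ∀ {a b}, seq a b = zero → seq b a = zero
  seq_compl : ∀ {a b}, seq a b = seq b a → seq a (compl b) = seq (compl b) a
  seq_assoc : ∀ {a b}, seq a b = seq b a → ∀ c, seq a (seq b c) = seq (seq a b) c
  comm_seq : ∀ {a b c}, seq c a = seq a c → seq c b = seq b c →
    seq c (seq a b) = seq (seq a b) c
  comm_add : ∀ {a b c}, seq c a = seq a c → seq c b = seq b c → D a b →
    seq c (add a b) = seq (add a b) c

namespace SEA
variable {E : Type*} (SE : SEA E)
/-- The order of the underlying effect algebra. -/
def le (a b : E) : Prop := pLe SE.D SE.add a b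
end SEA

/-- A convex sequential effect algebra: a sequential effect algebra together with a
`[0,1]`-action (convex structure). -/
structure ConvexSEA (E : Type*) extends SEA E where
  smul : ℝ → E → E
  smul_D : ∀ {r s : ℝ} (a : E), 0 ≤ r → 0 ≤ s → r + s ≤ 1 → D (smul r a) (smul s a)
  smul_add_dist : ∀ {r s : ℝ} (a : E), 0 ≤ r → 0 ≤ s → r + s ≤ 1 →
    smul (r + s) a = add (smul r a) (smul s a)
  smul_mul : ∀ {r s : ℝ} (a : E), 0 ≤ r → r ≤ 1 → 0 ≤ s → s ≤ 1 →
    smul (r * s) a = smul r (smul s a)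
  zero_smul : ∀ a, smul 0 a = zero
  one_smul : ∀ a, smul 1 a = a
  smul_D_add : ∀ {r : ℝ} {a b : E}, 0 ≤ r → r ≤ 1 → D a b → D (smul r a) (smul r b)
  smul_add : ∀ {r : ℝ} {a b : E}, 0 ≤ r → r ≤ 1 → D a b →
    smul r (add a b) = add (smul r a) (smul r b)

/-- A sequential effect space: a convex σ-sequential effect algebra. Decreasing
sequences have infima (given by `inf`), which are preserved by the sequential
product, and under which commutation is stable. -/
structure SES (E : Type*) extends ConvexSEA E where
  inf : (ℕ → E) → E
  inf_le : ∀ {f : ℕ → E}, (∀ n, pLe D add (f (n + 1)) (f n)) →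
    ∀ n, pLe D add (inf f) (f n)
  le_inf : ∀ {f : ℕ → E}, (∀ n, pLe D add (f (n + 1)) (f n)) →
    ∀ x, (∀ n, pLe D add x (f n)) → pLe D add x (inf f)
  seq_inf : ∀ {f : ℕ → E} (b : E), (∀ n, pLe D add (f (n + 1)) (f n)) →
    seq b (inf f) = inf (fun n => seq b (f n))
  comm_inf : ∀ {f : ℕ → E} {b : E}, (∀ n, pLe D add (f (n + 1)) (f n)) →
    (∀ n, seq b (f n) = seq (f n) b) → seq b (inf f) = seq (inf f) b

namespace SES
variable {E : Type*} (SE : SES E)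
/-- The order of the underlying effect algebra of a sequential effect space. -/
def le (a b : E) : Prop := pLe SE.D SE.add a b
end SES

namespace SESAux

variable {E : Type*} (SE : SES E)

/-- Reverse associativity: from `D a b` and `D (a+b) c` derive the other groupings. -/
lemma rassoc {a b c : E} (hab : SE.D a b) (h : SE.D (SE.add a b) c) :
    SE.D b c ∧ SE.D a (SE.add b c) ∧ SE.add a (SE.add b c) = SE.add (SE.add a b) c := by
  have hc : SE.D c (SE.add a b) := SE.D_comm h
  rw [SE.add_comm' hab] at hc
  have hba := SE.D_comm hab
  have hcb : SE.D c b := SE.D_assoc_left hba hc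
  have hbc := SE.D_comm hcb
  have h2 : SE.D (SE.add c b) a := SE.D_assoc hba hc
  have h3 : SE.D a (SE.add c b) := SE.D_comm h2
  rw [SE.add_comm' hcb] at h3
  exact ⟨hbc, h3, SE.add_assoc' hbc h3⟩

lemma compl_compl (a : E) : SE.compl (SE.compl a) = a := by
  have h1 : SE.D (SE.compl a) a := SE.D_comm (SE.D_compl a)
  have h2 : SE.add (SE.compl a) a = SE.one := by
    rw [SE.add_comm' h1]; exact SE.add_compl a
  exact (SE.compl_unique h1 h2).symm

lemma zero_add (a : E) : SE.add SE.zero a = a := by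
  rw [SE.add_comm' (SE.D_comm (SE.D_zero a))]; exact SE.add_zero' a

lemma compl_zero : SE.compl SE.zero = SE.one :=
  (SE.compl_unique (SE.D_comm (SE.D_zero SE.one)) (zero_add SE SE.one)).symm

lemma compl_add {a b : E} (hab : SE.D a b) :
    SE.compl b = SE.add a (SE.compl (SE.add a b)) := by
  set d := SE.compl (SE.add a b) with hd
  have h1 : SE.D (SE.add a b) d := SE.D_compl _
  obtain ⟨hbd, had, heq⟩ := rassoc SE hab h1
  have hdb := SE.D_comm hbd
  have had' : SE.D a (SE.add d b) := by rw [SE.add_comm' hbd] at had; exact had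
  have h4 : SE.add a (SE.add d b) = SE.add (SE.add a d) b := SE.add_assoc' hdb had'
  have h5 : SE.add (SE.add a d) b = SE.one := by
    rw [← h4, ← SE.add_comm' hbd, heq, SE.add_compl]
  have hD5 : SE.D (SE.add a d) b := SE.D_assoc hdb had'
  have h6 : SE.add b (SE.add a d) = SE.one := by
    rw [SE.add_comm' (SE.D_comm hD5)]; exact h5
  exact (SE.compl_unique (SE.D_comm hD5) h6).symm

/-- Cancellation in an effect algebra. -/
lemma cancel {a b c : E} (hab : SE.D a b) (hac : SE.D a c)
    (h : SE.add a b = SE.add a c) : b = c := by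
  have h1 := compl_add SE hab
  have h2 := compl_add SE hac
  rw [← h] at h2
  have : SE.compl b = SE.compl c := by rw [h1, h2]
  calc b = SE.compl (SE.compl b) := (compl_compl SE b).symm
    _ = SE.compl (SE.compl c) := by rw [this]
    _ = c := compl_compl SE c

lemma le_refl (x : E) : pLe SE.D SE.add x x := ⟨SE.zero, SE.D_zero x, SE.add_zero' x⟩

lemma le_one (x : E) : pLe SE.D SE.add x SE.one := ⟨SE.compl x, SE.D_compl x, SE.add_compl x⟩

lemma le_zero {x : E} (h : pLe SE.D SE.add x SE.zero) : x = SE.zero := by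
  obtain ⟨c, hD, hc⟩ := h
  have h1 : SE.D (SE.add x c) SE.one := by rw [hc]; exact SE.D_comm (SE.D_zero SE.one)
  obtain ⟨hc1, -, -⟩ := rassoc SE hD h1
  have hc0 : c = SE.zero := SE.zero_one hc1
  rw [hc0, SE.add_zero'] at hc; exact hc

lemma le_trans {x y z : E} (h1 : pLe SE.D SE.add x y) (h2 : pLe SE.D SE.add y z) :
    pLe SE.D SE.add x z := by
  obtain ⟨c, hD, hc⟩ := h1
  obtain ⟨d, hD2, hd⟩ := h2
  rw [← hc] at hD2 hd
  obtain ⟨hcd, hxd, heq⟩ := rassoc SE hD hD2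
  exact ⟨SE.add c d, hxd, by rw [heq, hd]⟩

lemma add_le_add {x a y b : E} (h1 : pLe SE.D SE.add x a) (h2 : pLe SE.D SE.add y b)
    (hD : SE.D a b) : SE.D x y ∧ pLe SE.D SE.add (SE.add x y) (SE.add a b) := by
  obtain ⟨c, hxc, hca⟩ := h1
  obtain ⟨d, hyd, hdb⟩ := h2
  subst hca; subst hdb
  obtain ⟨A1, A2, A3⟩ := rassoc SE hxc hD
  obtain ⟨B1, B2, B3⟩ := rassoc SE hyd (SE.D_comm A1)
  have hcyd : SE.add c (SE.add y d) = SE.add y (SE.add d c) := by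
    rw [SE.add_comm' A1, ← B3]
  rw [hcyd] at A2
  have Dxy := SE.D_assoc_left B2 A2
  have DxyDC := SE.D_assoc B2 A2
  have heq : SE.add (SE.add x y) (SE.add d c) = SE.add (SE.add x c) (SE.add y d) := by
    rw [← SE.add_assoc' B2 A2, ← hcyd, A3]
  exact ⟨Dxy, ⟨SE.add d c, DxyDC, heq⟩⟩

end SESAux
namespace SESAux
variable {E : Type*} (SE : SES E)

lemma seq_zero (a : E) : SE.seq a SE.zero = SE.zero := by
  have h := SE.seq_add a (SE.D_zero SE.zero)
  rw [SE.add_zero'] at h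
  have hD : SE.D (SE.seq a SE.zero) (SE.seq a SE.zero) := SE.seq_D a (SE.D_zero SE.zero)
  exact cancel SE hD (SE.D_zero _) (by rw [SE.add_zero']; exact h.symm)

lemma zero_seq (a : E) : SE.seq SE.zero a = SE.zero := SE.seq_orth (seq_zero SE a)

lemma seq_one (a : E) : SE.seq a SE.one = a := by
  have h0 : SE.seq a SE.zero = SE.seq SE.zero a := by rw [seq_zero, zero_seq]
  have h1 := SE.seq_compl h0
  rw [compl_zero SE] at h1
  rw [h1, SE.one_seq]

lemma half_add_half (x : E) :
    SE.add (SE.smul (1/2) x) (SE.smul (1/2) x) = x := by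
  have h := SE.smul_add_dist x (by norm_num : (0:ℝ) ≤ 1/2) (by norm_num : (0:ℝ) ≤ 1/2)
    (by norm_num : (1/2 : ℝ) + 1/2 ≤ 1)
  rw [show (1/2 : ℝ) + 1/2 = 1 by norm_num, SE.one_smul] at h
  exact h.symm

lemma half_D (x : E) : SE.D (SE.smul (1/2) x) (SE.smul (1/2) x) :=
  SE.smul_D x (by norm_num) (by norm_num) (by norm_num)

lemma seq_half (a y : E) : SE.seq a (SE.smul (1/2) y) = SE.smul (1/2) (SE.seq a y) := by
  have h1 : SE.seq a y = SE.add (SE.seq a (SE.smul (1/2) y)) (SE.seq a (SE.smul (1/2) y)) := by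
    conv_lhs => rw [← half_add_half SE y]
    exact SE.seq_add a (half_D SE y)
  have hDt : SE.D (SE.seq a (SE.smul (1/2) y)) (SE.seq a (SE.smul (1/2) y)) :=
    SE.seq_D a (half_D SE y)
  have h2 : SE.smul (1/2) (SE.seq a y) = SE.seq a (SE.smul (1/2) y) := by
    rw [h1, SE.smul_add (by norm_num) (by norm_num) hDt,
      ← SE.smul_add_dist _ (by norm_num : (0:ℝ) ≤ 1/2) (by norm_num : (0:ℝ) ≤ 1/2)
        (by norm_num : (1/2:ℝ) + 1/2 ≤ 1),
      show (1/2 : ℝ) + 1/2 = 1 by norm_num, SE.one_smul]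
  exact h2.symm

lemma two_pow_ge_one (n : ℕ) : (1:ℝ) ≤ 2 ^ n := one_le_pow₀ (by norm_num)

lemma invpow_nonneg (n : ℕ) : (0:ℝ) ≤ 1 / 2 ^ n := by positivity

lemma invpow_le_one (n : ℕ) : (1 / 2 ^ n : ℝ) ≤ 1 :=
  (div_le_one (by positivity)).mpr (two_pow_ge_one n)

lemma seq_smul_halfr {r : ℝ} (hr0 : 0 ≤ r) (hr1 : r ≤ 1) (a x : E)
    (ih : SE.seq a (SE.smul r x) = SE.smul r (SE.seq a x)) :
    SE.seq a (SE.smul (r/2) x) = SE.smul (r/2) (SE.seq a x) := by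
  have e : (r/2 : ℝ) = (1/2) * r := by ring
  rw [e, SE.smul_mul x (by norm_num) (by norm_num) hr0 hr1, seq_half, ih,
    ← SE.smul_mul (SE.seq a x) (by norm_num) (by norm_num) hr0 hr1]

lemma seq_smul_invpow (a x : E) :
    ∀ n : ℕ, SE.seq a (SE.smul (1/2^n) x) = SE.smul (1/2^n) (SE.seq a x)
  | 0 => by
      rw [show (1/2^0 : ℝ) = 1 by norm_num, SE.one_smul, SE.one_smul]
  | n+1 => by
      have e : (1/2^(n+1) : ℝ) = (1/2^n)/2 := by rw [pow_succ]; ring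
      rw [e]
      exact seq_smul_halfr SE (invpow_nonneg n) (invpow_le_one n) a x (seq_smul_invpow a x n)

lemma seq_smul_dyadic (a x : E) (k n : ℕ) (hk : (k:ℝ) ≤ 2^n) :
    SE.seq a (SE.smul ((k:ℝ)/2^n) x) = SE.smul ((k:ℝ)/2^n) (SE.seq a x) := by
  induction k with
  | zero =>
      rw [show ((0:ℕ):ℝ)/2^n = 0 by norm_num, SE.zero_smul, seq_zero, SE.zero_smul]
  | succ k ih =>
      have hk' : (k:ℝ) ≤ 2^n := by push_cast at hk ⊢; linarith
      have e : ((k+1:ℕ):ℝ)/2^n = (k:ℝ)/2^n + 1/2^n := by push_cast; ring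
      have hr0 : (0:ℝ) ≤ (k:ℝ)/2^n := by positivity
      have hs0 : (0:ℝ) ≤ 1/2^n := invpow_nonneg n
      have hrs : (k:ℝ)/2^n + 1/2^n ≤ 1 := by
        rw [← add_div, div_le_one (by positivity)]
        push_cast at hk ⊢; linarith
      rw [e, SE.smul_add_dist x hr0 hs0 hrs, SE.seq_add a (SE.smul_D x hr0 hs0 hrs),
        ih hk', seq_smul_invpow, ← SE.smul_add_dist (SE.seq a x) hr0 hs0 hrs]

end SESAux
namespace SESAux
variable {E : Type*} (SE : SES E)

lemma smul_le_smul_left {r s : ℝ} (x : E) (hr : 0 ≤ r) (hrs : r ≤ s) (hs : s ≤ 1) :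
    pLe SE.D SE.add (SE.smul r x) (SE.smul s x) :=
  ⟨SE.smul (s - r) x, SE.smul_D x hr (by linarith) (by linarith),
    by rw [← SE.smul_add_dist x hr (by linarith) (by linarith)]; congr 1; ring⟩

lemma smul_le_smul_right {r : ℝ} (hr0 : 0 ≤ r) (hr1 : r ≤ 1) {x y : E}
    (h : pLe SE.D SE.add x y) :
    pLe SE.D SE.add (SE.smul r x) (SE.smul r y) := by
  obtain ⟨c, hD, hc⟩ := h
  exact ⟨SE.smul r c, SE.smul_D_add hr0 hr1 hD,
    by rw [← SE.smul_add hr0 hr1 hD, hc]⟩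

lemma half_pow_sum (n : ℕ) : (1/2^(n+1) : ℝ) + 1/2^(n+1) = 1/2^n := by
  rw [pow_succ]; ring

lemma invpow_succ_le (n : ℕ) : (1/2^(n+1) : ℝ) ≤ 1/2^n := by
  have h := half_pow_sum n
  have := invpow_nonneg (n+1)
  linarith

lemma pow_seq_dec :
    ∀ n, pLe SE.D SE.add (SE.smul (1/2^(n+1)) SE.one) (SE.smul (1/2^n) SE.one) := fun n =>
  smul_le_smul_left SE SE.one (invpow_nonneg (n+1)) (invpow_succ_le n) (invpow_le_one n)

lemma inf_pow_zero : SE.inf (fun n => SE.smul (1/2^n) SE.one) = SE.zero := by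
  have dec := pow_seq_dec SE
  have hu := SE.inf_le (f := fun n => SE.smul ((1:ℝ)/2^n) SE.one) dec
  set u := SE.inf (fun n => SE.smul ((1:ℝ)/2^n) SE.one) with hudef
  have hsum : ∀ n, (1/2^(n+1) : ℝ) + 1/2^(n+1) ≤ 1 := fun n => by
    rw [half_pow_sum n]; exact invpow_le_one n
  have hDw : ∀ n, SE.D (SE.smul (1/2^(n+1)) SE.one) (SE.smul (1/2^(n+1)) SE.one) := fun n =>
    SE.smul_D SE.one (invpow_nonneg (n+1)) (invpow_nonneg (n+1)) (hsum n)
  have hw : ∀ n, SE.add (SE.smul ((1:ℝ)/2^(n+1)) SE.one) (SE.smul ((1:ℝ)/2^(n+1)) SE.one)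
      = SE.smul ((1:ℝ)/2^n) SE.one := fun n => by
    rw [← SE.smul_add_dist SE.one (invpow_nonneg (n+1)) (invpow_nonneg (n+1)) (hsum n),
      half_pow_sum n]
  have key : ∀ n, pLe SE.D SE.add (SE.add u u) (SE.smul (1/2^n) SE.one) := by
    intro n
    obtain ⟨-, hle⟩ := add_le_add SE (hu (n+1)) (hu (n+1)) (hDw n)
    rw [hw n] at hle; exact hle
  have hDuu : SE.D u u := (add_le_add SE (hu 1) (hu 1) (hDw 0)).1
  obtain ⟨c, hDc, hc⟩ := SE.le_inf (f := fun n => SE.smul ((1:ℝ)/2^n) SE.one) dec _ key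
  obtain ⟨hcc, hDu_uc, heq⟩ := rassoc SE hDuu hDc
  have h5 : SE.add u (SE.add u c) = SE.add u SE.zero := by
    rw [heq, SE.add_zero']; exact hc
  have h6 := cancel SE hDu_uc (SE.D_zero _) h5
  exact le_zero SE ⟨c, hcc, h6⟩

lemma arch {c : E} (h : ∀ n, pLe SE.D SE.add c (SE.smul (1/2^n) SE.one)) : c = SE.zero := by
  have h2 := SE.le_inf (f := fun n => SE.smul ((1:ℝ)/2^n) SE.one) (pow_seq_dec SE) c h
  rw [inf_pow_zero SE] at h2
  exact le_zero SE h2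

/-! Dyadic approximation of `l` from above. -/

lemma dseq_ge (l : ℝ) (n : ℕ) : l ≤ (⌈l * 2^n⌉₊ : ℝ)/2^n := by
  rw [le_div_iff₀ (by positivity : (0:ℝ) < 2^n)]
  exact Nat.le_ceil _

lemma dseq_le (l : ℝ) (h0 : 0 ≤ l) (n : ℕ) : (⌈l * 2^n⌉₊ : ℝ)/2^n ≤ l + 1/2^n := by
  have h := Nat.ceil_lt_add_one (by positivity : (0:ℝ) ≤ l * 2^n)
  rw [div_le_iff₀ (by positivity : (0:ℝ) < 2^n)]
  have e : (l + 1/2^n) * 2^n = l * 2^n + 1 := by field_simp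
  rw [e]; linarith

lemma dseq_ceil_le (l : ℝ) (h1 : l ≤ 1) (n : ℕ) : (⌈l * 2^n⌉₊ : ℝ) ≤ 2^n := by
  have h : (⌈l * 2^n⌉₊ : ℕ) ≤ 2^n := by
    apply Nat.ceil_le.mpr
    push_cast
    nlinarith [two_pow_ge_one n, pow_pos (show (0:ℝ) < 2 by norm_num) n]
  calc (⌈l * 2^n⌉₊ : ℝ) ≤ ((2^n : ℕ) : ℝ) := by exact_mod_cast h
    _ = 2^n := by push_cast; ring

lemma dseq_le_one (l : ℝ) (h1 : l ≤ 1) (n : ℕ) : (⌈l * 2^n⌉₊ : ℝ)/2^n ≤ 1 :=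
  (div_le_one (by positivity)).mpr (dseq_ceil_le l h1 n)

lemma dseq_nonneg (l : ℝ) (n : ℕ) : (0:ℝ) ≤ (⌈l * 2^n⌉₊ : ℝ)/2^n := by positivity

lemma dseq_dec (l : ℝ) (n : ℕ) :
    (⌈l * 2^(n+1)⌉₊ : ℝ)/2^(n+1) ≤ (⌈l * 2^n⌉₊ : ℝ)/2^n := by
  have hle : (⌈l * 2^(n+1)⌉₊ : ℕ) ≤ 2 * ⌈l * 2^n⌉₊ := by
    apply Nat.ceil_le.mpr
    have h := Nat.le_ceil (l * 2^n)
    push_cast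
    rw [pow_succ]
    nlinarith
  have hle' : (⌈l * 2^(n+1)⌉₊ : ℝ) ≤ 2 * (⌈l * 2^n⌉₊ : ℝ) := by exact_mod_cast hle
  rw [div_le_div_iff₀ (by positivity) (by positivity)]
  have hp : (2:ℝ)^(n+1) = 2^n * 2 := pow_succ 2 n
  nlinarith [pow_pos (show (0:ℝ) < 2 by norm_num) n, (by positivity : (0:ℝ) ≤ (⌈l * 2^n⌉₊ : ℝ))]

lemma smul_dseq_dec (l : ℝ) (h1 : l ≤ 1) (x : E) :
    ∀ n, pLe SE.D SE.add (SE.smul ((⌈l * 2^(n+1)⌉₊ : ℝ)/2^(n+1)) x)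
      (SE.smul ((⌈l * 2^n⌉₊ : ℝ)/2^n) x) := fun n =>
  smul_le_smul_left SE x (dseq_nonneg l (n+1)) (dseq_dec l n) (dseq_le_one l h1 n)

lemma inf_smul_eq (l : ℝ) (h0 : 0 ≤ l) (h1 : l ≤ 1) (x : E) :
    SE.inf (fun n => SE.smul ((⌈l * 2^n⌉₊ : ℝ)/2^n) x) = SE.smul l x := by
  have dec := smul_dseq_dec SE l h1 x
  have lower : ∀ n, pLe SE.D SE.add (SE.smul l x) (SE.smul ((⌈l * 2^n⌉₊ : ℝ)/2^n) x) :=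
    fun n => smul_le_smul_left SE x h0 (dseq_ge l n) (dseq_le_one l h1 n)
  obtain ⟨c, hDc, hc⟩ := SE.le_inf (f := fun n => SE.smul ((⌈l * 2^n⌉₊ : ℝ)/2^n) x) dec _ lower
  have hcle : ∀ n, pLe SE.D SE.add c (SE.smul (1/2^n) SE.one) := by
    intro n
    obtain ⟨e, hDe, he⟩ := SE.inf_le (f := fun n => SE.smul ((⌈l * 2^n⌉₊ : ℝ)/2^n) x) dec n
    rw [← hc] at hDe he
    obtain ⟨hce, hlce, heq⟩ := rassoc SE hDc hDe
    have hd0 : (0:ℝ) ≤ (⌈l * 2^n⌉₊ : ℝ)/2^n - l := sub_nonneg.mpr (dseq_ge l n)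
    have hd1 : l + ((⌈l * 2^n⌉₊ : ℝ)/2^n - l) ≤ 1 := by
      have := dseq_le_one l h1 n; linarith
    have hsplit : SE.smul ((⌈l * 2^n⌉₊ : ℝ)/2^n) x
        = SE.add (SE.smul l x) (SE.smul ((⌈l * 2^n⌉₊ : ℝ)/2^n - l) x) := by
      rw [← SE.smul_add_dist x h0 hd0 hd1]; congr 1; ring
    have hDl : SE.D (SE.smul l x) (SE.smul ((⌈l * 2^n⌉₊ : ℝ)/2^n - l) x) :=
      SE.smul_D x h0 hd0 hd1
    have h5 : SE.add (SE.smul l x) (SE.add c e)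
        = SE.add (SE.smul l x) (SE.smul ((⌈l * 2^n⌉₊ : ℝ)/2^n - l) x) := by
      rw [heq, he, ← hsplit]
    have h6 := cancel SE hlce hDl h5
    have h7 : pLe SE.D SE.add c (SE.smul ((⌈l * 2^n⌉₊ : ℝ)/2^n - l) x) := ⟨e, hce, h6⟩
    have hdle : (⌈l * 2^n⌉₊ : ℝ)/2^n - l ≤ 1 := by
      have := dseq_le_one l h1 n; linarith
    have h8 := smul_le_smul_right SE hd0 hdle (le_one SE x)
    have h9 : pLe SE.D SE.add (SE.smul ((⌈l * 2^n⌉₊ : ℝ)/2^n - l) SE.one)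
        (SE.smul (1/2^n) SE.one) := by
      apply smul_le_smul_left SE SE.one hd0 _ (invpow_le_one n)
      have := dseq_le l h0 n; linarith
    exact le_trans SE (le_trans SE h7 h8) h9
  have hc0 := arch SE hcle
  rw [hc0, SE.add_zero'] at hc
  exact hc.symm

lemma seq_smul_full (a x : E) (l : ℝ) (h0 : 0 ≤ l) (h1 : l ≤ 1) :
    SE.seq a (SE.smul l x) = SE.smul l (SE.seq a x) := by
  have e1 := inf_smul_eq SE l h0 h1 x
  have e2 := inf_smul_eq SE l h0 h1 (SE.seq a x)
  rw [← e1, SE.seq_inf a (smul_dseq_dec SE l h1 x), ← e2]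
  congr 1; funext n
  exact seq_smul_dyadic SE a x (⌈l * 2^n⌉₊) n (dseq_ceil_le l h1 n)

end SESAux
namespace SESAux
variable {E : Type*} (SE : SES E)

lemma central_one : ∀ x, SE.seq SE.one x = SE.seq x SE.one := fun x => by
  rw [SE.one_seq, seq_one SE]

lemma central_zero : ∀ x : E, SE.seq SE.zero x = SE.seq x SE.zero := fun x => by
  rw [zero_seq SE, seq_zero SE]

lemma central_add {a b : E} (hD : SE.D a b)
    (ha : ∀ x, SE.seq a x = SE.seq x a) (hb : ∀ x, SE.seq b x = SE.seq x b) :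
    ∀ x, SE.seq (SE.add a b) x = SE.seq x (SE.add a b) := fun x =>
  (SE.comm_add (ha x).symm (hb x).symm hD).symm

lemma comm_self_half (x : E) :
    SE.seq x (SE.smul (1/2) x) = SE.seq (SE.smul (1/2) x) x := by
  have h := SE.comm_add (a := SE.smul (1/2) x) (b := SE.smul (1/2) x)
    (c := SE.smul (1/2) x) rfl rfl (half_D SE x)
  rw [half_add_half SE x] at h
  exact h.symm

lemma comm_half_compl (x : E) :
    SE.seq x (SE.smul (1/2) (SE.compl x)) = SE.seq (SE.smul (1/2) (SE.compl x)) x := by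
  have h := comm_self_half SE (SE.compl x)
  have h2 := SE.seq_compl h.symm
  rw [compl_compl SE] at h2
  exact h2.symm

lemma central_half_one : ∀ x, SE.seq (SE.smul (1/2) SE.one) x = SE.seq x (SE.smul (1/2) SE.one) := by
  intro x
  have hD : SE.D (SE.smul (1/2) x) (SE.smul (1/2) (SE.compl x)) :=
    SE.smul_D_add (by norm_num) (by norm_num) (SE.D_compl x)
  have h := SE.comm_add (c := x) (comm_self_half SE x) (comm_half_compl SE x) hD
  have he : SE.add (SE.smul (1/2) x) (SE.smul (1/2) (SE.compl x)) = SE.smul (1/2) SE.one := by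
    rw [← SE.smul_add (by norm_num) (by norm_num) (SE.D_compl x), SE.add_compl]
  rw [he] at h
  exact h.symm

lemma central_smul_half {z : E} (hz : ∀ x, SE.seq z x = SE.seq x z) :
    ∀ x, SE.seq (SE.smul (1/2) z) x = SE.seq x (SE.smul (1/2) z) := by
  intro x
  have he : SE.seq (SE.smul (1/2) SE.one) z = SE.smul (1/2) z := by
    rw [central_half_one SE z, seq_half SE z SE.one, seq_one SE]
  have h := SE.comm_seq (a := SE.smul (1/2) SE.one) (b := z) (c := x)
    (central_half_one SE x).symm (hz x).symm
  rw [he] at h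
  exact h.symm

lemma central_invpow : ∀ n : ℕ, ∀ x, SE.seq (SE.smul (1/2^n) SE.one) x
    = SE.seq x (SE.smul (1/2^n) SE.one)
  | 0 => by
      intro x
      rw [show (1/2^0 : ℝ) = 1 by norm_num, SE.one_smul]
      exact central_one SE x
  | n+1 => by
      intro x
      rw [show (1/2^(n+1) : ℝ) = (1/2) * (1/2^n) by rw [pow_succ]; ring,
        SE.smul_mul SE.one (by norm_num) (by norm_num) (invpow_nonneg n) (invpow_le_one n)]
      exact central_smul_half SE (central_invpow n) x

lemma central_dyadic (k n : ℕ) (hk : (k:ℝ) ≤ 2^n) :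
    ∀ x, SE.seq (SE.smul ((k:ℝ)/2^n) SE.one) x = SE.seq x (SE.smul ((k:ℝ)/2^n) SE.one) := by
  induction k with
  | zero =>
      intro x
      rw [show ((0:ℕ):ℝ)/2^n = 0 by norm_num, SE.zero_smul]
      exact central_zero SE x
  | succ k ih =>
      intro x
      have hk' : (k:ℝ) ≤ 2^n := by push_cast at hk ⊢; linarith
      have e : ((k+1:ℕ):ℝ)/2^n = (k:ℝ)/2^n + 1/2^n := by push_cast; ring
      have hr0 : (0:ℝ) ≤ (k:ℝ)/2^n := by positivity
      have hs0 : (0:ℝ) ≤ 1/2^n := invpow_nonneg n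
      have hrs : (k:ℝ)/2^n + 1/2^n ≤ 1 := by
        rw [← add_div, div_le_one (by positivity)]
        push_cast at hk ⊢; linarith
      rw [e, SE.smul_add_dist SE.one hr0 hs0 hrs]
      exact central_add SE (SE.smul_D SE.one hr0 hs0 hrs) (ih hk') (central_invpow SE n) x

lemma central_smul_one (l : ℝ) (h0 : 0 ≤ l) (h1 : l ≤ 1) :
    ∀ x, SE.seq (SE.smul l SE.one) x = SE.seq x (SE.smul l SE.one) := by
  intro x
  rw [← inf_smul_eq SE l h0 h1 SE.one]
  exact (SE.comm_inf (smul_dseq_dec SE l h1 SE.one)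
    (fun n => (central_dyadic SE (⌈l * 2^n⌉₊) n (dseq_ceil_le l h1 n) x).symm)).symm

end SESAux
/-- In a sequential effect space, `(λa) ∘ b = a ∘ (λb) = λ(a ∘ b)` for `λ ∈ [0,1]`,
and if `a` and `b` commute then `a` commutes with `λb`. -/
theorem SES.seq_smul {E : Type*} (SE : SES E) (a b : E) (l : ℝ) (h0 : 0 ≤ l) (h1 : l ≤ 1) :
    SE.seq (SE.smul l a) b = SE.smul l (SE.seq a b) ∧
    SE.seq a (SE.smul l b) = SE.smul l (SE.seq a b) ∧
    (SE.seq a b = SE.seq b a → SE.seq a (SE.smul l b) = SE.seq (SE.smul l b) a) := by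
  have hcentral := SESAux.central_smul_one SE l h0 h1
  have hu : ∀ y : E, SE.seq y (SE.smul l SE.one) = SE.smul l y := fun y => by
    rw [SESAux.seq_smul_full SE y SE.one l h0 h1, SESAux.seq_one SE]
  have hlu : ∀ y : E, SE.seq (SE.smul l SE.one) y = SE.smul l y := fun y => by
    rw [hcentral y, hu y]
  have claim1 : ∀ u v : E, SE.seq (SE.smul l u) v = SE.smul l (SE.seq u v) := by
    intro u v
    rw [show SE.smul l u = SE.seq (SE.smul l SE.one) u from (hlu u).symm,
      ← SE.seq_assoc (hcentral u) v, hlu (SE.seq u v)]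
  refine ⟨claim1 a b, SESAux.seq_smul_full SE a b l h0 h1, fun hab => ?_⟩
  rw [SESAux.seq_smul_full SE a b l h0 h1, hab, ← claim1 b a]
end

section
/- Let S be a set of mutually commuting elements in a sequential effect algebra E. Then the bicommutant S′′ is a commutative sequential effect sub-algebra of E (every two elements of S′′ commute under ∘). -/
/-- The commutant of a subset `S` of a sequential effect algebra. -/
def SEA.commutant {E : Type*} (SE : SEA E) (S : Set E) : Set E :=
  {a | ∀ s ∈ S, SE.seq a s = SE.seq s a}

namespace SEA

variable {E : Type*} (SE : SEA E)

theorem commutant_anti {S T : Set E} (h : S ⊆ T) : SE.commutant T ⊆ SE.commutant S :=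
  fun _ ha s hs => ha s (h hs)

theorem subset_commutant_of_pairwise_commute {S : Set E}
    (hS : ∀ a ∈ S, ∀ b ∈ S, SE.seq a b = SE.seq b a) : S ⊆ SE.commutant S :=
  fun a ha s hs => hS a ha s hs

theorem bicommutant_subset_commutant_of_pairwise_commute {S : Set E}
    (hS : ∀ a ∈ S, ∀ b ∈ S, SE.seq a b = SE.seq b a) :
    SE.commutant (SE.commutant S) ⊆ SE.commutant S :=
  SE.commutant_anti (SE.subset_commutant_of_pairwise_commute hS)

end SEA

/-- If `S` is a set of mutually commuting elements of a sequential effect algebra,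
then the bicommutant `S′′` is commutative: any two of its elements commute. -/
theorem SEA.bicommutant_commutative {E : Type*} (SE : SEA E) (S : Set E)
    (hS : ∀ a ∈ S, ∀ b ∈ S, SE.seq a b = SE.seq b a) :
    ∀ a ∈ SE.commutant (SE.commutant S), ∀ b ∈ SE.commutant (SE.commutant S),
      SE.seq a b = SE.seq b a := by
  intro a ha b hb
  exact ha b (SE.bicommutant_subset_commutant_of_pairwise_commute hS hb)
end

section
/- Let X be a basically disconnected compact Hausdorff space. Then the set of continuous functions X → [0,1] forms a commutative convex σ-sequential effect algebra under pointwise addition (when bounded by 1), pointwise scalar multiplication, and pointwise multiplication as the sequential product. -/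
/-- A topological space is basically disconnected if the closure of every cozero-set
is open. -/
def BasicallyDisconnected (X : Type*) [TopologicalSpace X] : Prop :=
  ∀ f : C(X, ℝ), IsOpen (closure (f ⁻¹' Set.Ioi 0))

/-!
Everything except σ-completeness is a pointwise identity in `[0, 1]`, and commutativity of
multiplication trivialises all commutation hypotheses of the sequential product. For a sequence
`fₙ` let `U t` be the closure of the cozero set `{x | ∃ n, fₙ x < t}` and `g x = inf {t | x ∈ U t}`.
In a basically disconnected space every `U t` is clopen, which makes `g` continuous. If `c` is
continuous and `c ≤ b fₙ` for all `n`, then `c ≤ b t` on `U t`, because the open set `{c > b t}`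
cannot meet `{∃ n, fₙ < t}`; hence `c ≤ b g`. With `b = 1` this makes `g` the infimum of the
`fₙ`, and for general `b` it shows that `b g` is the infimum of the `b fₙ`.
-/

open Set

section

variable {X : Type*} [TopologicalSpace X]

theorem ContinuousMap.exists_preimage_Ioi_eq_iUnion (F : ℕ → C(X, ℝ)) :
    ∃ G : C(X, ℝ), G ⁻¹' Ioi 0 = ⋃ n, F n ⁻¹' Ioi 0 := by
  set w : ℕ → X → ℝ := fun n x => (2⁻¹ : ℝ) ^ n * min (max (F n x) 0) 1
  have hw_nonneg (n : ℕ) (x : X) : 0 ≤ w n x := by positivity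
  have hw_le (n : ℕ) (x : X) : ‖w n x‖ ≤ (2⁻¹ : ℝ) ^ n := by
    rw [Real.norm_of_nonneg (hw_nonneg n x)]
    exact mul_le_of_le_one_right (by positivity) (min_le_right _ _)
  have hw_pos (n : ℕ) (x : X) : 0 < w n x ↔ 0 < F n x := by
    simp only [w, mul_pos_iff_of_pos_left (by positivity : (0 : ℝ) < 2⁻¹ ^ n), lt_min_iff,
      lt_max_iff, lt_irrefl, or_false, zero_lt_one, and_true]
  have hsum : Summable fun n : ℕ => (2⁻¹ : ℝ) ^ n :=
    summable_geometric_of_lt_one (by norm_num) (by norm_num)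
  refine ⟨⟨fun x => ∑' n, w n x, continuous_tsum (fun n => by fun_prop) hsum hw_le⟩, ?_⟩
  ext x
  simp only [mem_preimage, mem_Ioi, ContinuousMap.coe_mk, mem_iUnion, ← hw_pos]
  refine ⟨fun hpos => ?_, fun ⟨n, hn⟩ =>
    (hsum.of_norm_bounded (hw_le · x)).tsum_pos (hw_nonneg · x) n hn⟩
  by_contra! hzero
  have : ∀ n, w n x = 0 := fun n => (hzero n).antisymm (hw_nonneg n x)
  simp [this] at hpos

def closedSublevel (f : ℕ → C(X, ℝ)) (t : ℝ) : Set X := closure (⋃ n, f n ⁻¹' Iio t)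

theorem BasicallyDisconnected.isOpen_closedSublevel (hX : BasicallyDisconnected X)
    (f : ℕ → C(X, ℝ)) (t : ℝ) : IsOpen (closedSublevel f t) := by
  obtain ⟨G, hG⟩ :=
    ContinuousMap.exists_preimage_Ioi_eq_iUnion fun n => ContinuousMap.const X t - f n
  have hG' : G ⁻¹' Ioi 0 = ⋃ n, f n ⁻¹' Iio t := by
    rw [hG]
    ext x
    simp [sub_pos]
  rw [closedSublevel, ← hG']
  exact hX G

/-- For basically disconnected `X` this is the greatest continuous minorant of the sequence,
which may lie strictly below its pointwise infimum. -/
noncomputable def seqInf (f : ℕ → C(X, ℝ)) (x : X) : ℝ := sInf {t | x ∈ closedSublevel f t}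

section seqInf

variable {f : ℕ → C(X, ℝ)}

theorem closedSublevel_mono : Monotone (closedSublevel f) := fun _ _ hst =>
  closure_mono <| iUnion_mono fun _ _ hx => lt_of_lt_of_le hx hst

theorem mem_closedSublevel_of_lt {x : X} {t : ℝ} (n : ℕ) (h : f n x < t) :
    x ∈ closedSublevel f t :=
  subset_closure (mem_iUnion_of_mem n h)

theorem nonempty_closedSublevel_setOf (x : X) : {t | x ∈ closedSublevel f t}.Nonempty :=
  ⟨f 0 x + 1, mem_closedSublevel_of_lt 0 (lt_add_one _)⟩

theorem le_mul_of_mem_closedSublevel {b c : C(X, ℝ)} (hb : ∀ x, 0 ≤ b x)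
    (hc : ∀ n x, c x ≤ b x * f n x) {x : X} {t : ℝ} (hx : x ∈ closedSublevel f t) :
    c x ≤ b x * t := by
  by_contra! hlt
  have hopen : IsOpen {y | b y * t < c y} := isOpen_lt (by fun_prop) c.continuous
  obtain ⟨y, hy, hyV⟩ := mem_closure_iff.mp hx _ hopen hlt
  obtain ⟨n, hn⟩ := mem_iUnion.mp hyV
  exact hy.not_ge ((hc n y).trans (mul_le_mul_of_nonneg_left hn.le (hb y)))

theorem le_mul_seqInf {b c : C(X, ℝ)} (hb : ∀ x, 0 ≤ b x) (hc : ∀ n x, c x ≤ b x * f n x)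
    (x : X) : c x ≤ b x * seqInf f x := by
  rw [seqInf, ← smul_eq_mul, ← Real.sInf_smul_of_nonneg (hb x)]
  refine le_csInf ((nonempty_closedSublevel_setOf x).smul_set) ?_
  rintro _ ⟨t, ht, rfl⟩
  exact le_mul_of_mem_closedSublevel hb hc ht

theorem le_seqInf {c : C(X, ℝ)} (hc : ∀ n x, c x ≤ f n x) (x : X) : c x ≤ seqInf f x := by
  simpa using le_mul_seqInf (b := 1) (fun _ => zero_le_one) (by simpa using hc) x

variable {a : ℝ} (hf : ∀ n x, a ≤ f n x)
include hf

theorem bddBelow_closedSublevel_setOf (x : X) : BddBelow {t | x ∈ closedSublevel f t} :=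
  ⟨a, fun _ ht => by
    simpa using le_mul_of_mem_closedSublevel (b := 1) (c := .const X a)
      (fun _ => zero_le_one) (by simpa using hf) ht⟩

theorem seqInf_le_of_mem_closedSublevel {x : X} {t : ℝ} (hx : x ∈ closedSublevel f t) :
    seqInf f x ≤ t :=
  csInf_le (bddBelow_closedSublevel_setOf hf x) hx

theorem seqInf_le (n : ℕ) (x : X) : seqInf f x ≤ f n x :=
  le_of_forall_gt_imp_ge_of_dense fun _ ht =>
    seqInf_le_of_mem_closedSublevel hf (mem_closedSublevel_of_lt n ht)

theorem preimage_seqInf_Iio (s : ℝ) : seqInf f ⁻¹' Iio s = ⋃ t < s, closedSublevel f t := by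
  ext x
  simp only [mem_preimage, mem_Iio, mem_iUnion, exists_prop]
  constructor
  · intro hx
    obtain ⟨t, ht, hts⟩ := exists_lt_of_csInf_lt (nonempty_closedSublevel_setOf x) hx
    exact ⟨t, hts, ht⟩
  · rintro ⟨t, hts, hx⟩
    exact (seqInf_le_of_mem_closedSublevel hf hx).trans_lt hts

theorem preimage_seqInf_Ioi (s : ℝ) : seqInf f ⁻¹' Ioi s = ⋃ t > s, (closedSublevel f t)ᶜ := by
  ext x
  simp only [mem_preimage, mem_Ioi, mem_iUnion, mem_compl_iff, exists_prop]
  constructor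
  · intro hx
    obtain ⟨t, hst, htx⟩ := exists_between hx
    exact ⟨t, hst, fun hmem => (seqInf_le_of_mem_closedSublevel hf hmem).not_gt htx⟩
  · rintro ⟨t, hst, hx⟩
    refine hst.trans_le (le_csInf (nonempty_closedSublevel_setOf x) fun r hr => ?_)
    by_contra! hrt
    exact hx (closedSublevel_mono hrt.le hr)

theorem continuous_seqInf (hX : BasicallyDisconnected X) : Continuous (seqInf f) := by
  refine OrderTopology.continuous_iff.mpr fun s => ⟨?_, ?_⟩
  · rw [preimage_seqInf_Ioi hf]
    exact isOpen_biUnion fun t _ => isClosed_closure.isOpen_compl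
  · rw [preimage_seqInf_Iio hf]
    exact isOpen_biUnion fun t _ => hX.isOpen_closedSublevel f t

end seqInf

abbrev ContinuousEffect (X : Type*) [TopologicalSpace X] :=
  {f : C(X, ℝ) // ∀ x, f x ∈ Icc (0 : ℝ) 1}

namespace ContinuousEffect

@[ext]
theorem ext {f g : ContinuousEffect X} (h : ∀ x, f.1 x = g.1 x) : f = g :=
  Subtype.ext (ContinuousMap.ext h)

theorem nonneg (f : ContinuousEffect X) (x : X) : 0 ≤ f.1 x := (f.2 x).1

theorem le_one (f : ContinuousEffect X) (x : X) : f.1 x ≤ 1 := (f.2 x).2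

def Orthogonal (f g : ContinuousEffect X) : Prop := ∀ x, f.1 x + g.1 x ≤ 1

noncomputable section

/-- Truncating at `1` makes the sum total; on orthogonal pairs it is the pointwise sum. -/
def add (f g : ContinuousEffect X) : ContinuousEffect X :=
  ⟨⟨fun x => min (f.1 x + g.1 x) 1, by fun_prop⟩,
    fun x => ⟨le_min (add_nonneg (f.nonneg x) (g.nonneg x)) zero_le_one, min_le_right _ _⟩⟩

def zero : ContinuousEffect X := ⟨0, fun _ => ⟨le_rfl, zero_le_one⟩⟩

def one : ContinuousEffect X := ⟨1, fun _ => ⟨zero_le_one, le_rfl⟩⟩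

def compl (f : ContinuousEffect X) : ContinuousEffect X :=
  ⟨1 - f.1, fun x => ⟨sub_nonneg.2 (f.le_one x), sub_le_self _ (f.nonneg x)⟩⟩

def seq (f g : ContinuousEffect X) : ContinuousEffect X :=
  ⟨f.1 * g.1, fun x => ⟨mul_nonneg (f.nonneg x) (g.nonneg x),
    mul_le_one₀ (f.le_one x) (g.nonneg x) (g.le_one x)⟩⟩

/-- Scalars are projected onto `[0, 1]` to make the action total. -/
def smul (r : ℝ) (f : ContinuousEffect X) : ContinuousEffect X :=
  ⟨(projIcc (0 : ℝ) 1 zero_le_one r : ℝ) • f.1, fun x =>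
    ⟨mul_nonneg (projIcc (0 : ℝ) 1 zero_le_one r).2.1 (f.nonneg x),
      mul_le_one₀ (projIcc (0 : ℝ) 1 zero_le_one r).2.2 (f.nonneg x) (f.le_one x)⟩⟩

end

@[simp] theorem add_apply (f g : ContinuousEffect X) (x : X) :
    (add f g).1 x = min (f.1 x + g.1 x) 1 := rfl

theorem add_apply_of_orthogonal {f g : ContinuousEffect X} (h : Orthogonal f g) (x : X) :
    (add f g).1 x = f.1 x + g.1 x := min_eq_left (h x)

@[simp] theorem zero_apply (x : X) : (zero : ContinuousEffect X).1 x = 0 := rfl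

@[simp] theorem one_apply (x : X) : (one : ContinuousEffect X).1 x = 1 := rfl

@[simp] theorem compl_apply (f : ContinuousEffect X) (x : X) : (compl f).1 x = 1 - f.1 x := rfl

@[simp] theorem seq_apply (f g : ContinuousEffect X) (x : X) :
    (seq f g).1 x = f.1 x * g.1 x := rfl

theorem seq_comm (f g : ContinuousEffect X) : seq f g = seq g f :=
  ext fun _ => mul_comm _ _

theorem smul_apply {r : ℝ} (h0 : 0 ≤ r) (h1 : r ≤ 1) (f : ContinuousEffect X) (x : X) :
    (smul r f).1 x = r * f.1 x := by
  simp [smul, projIcc_of_mem _ ⟨h0, h1⟩]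

theorem pLe_iff {f g : ContinuousEffect X} :
    pLe Orthogonal add f g ↔ ∀ x, f.1 x ≤ g.1 x := by
  constructor
  · rintro ⟨c, hfc, rfl⟩ x
    rw [add_apply_of_orthogonal hfc]
    exact le_add_of_nonneg_right (c.nonneg x)
  · intro h
    refine ⟨⟨g.1 - f.1, fun x => ⟨sub_nonneg.2 (h x), (sub_le_self _ (f.nonneg x)).trans
      (g.le_one x)⟩⟩, fun x => by simpa using g.le_one x, ext fun x => ?_⟩
    simpa using g.le_one x

theorem orthogonal_add_right_iff {a b c : ContinuousEffect X} (hbc : Orthogonal b c) :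
    Orthogonal a (add b c) ↔ ∀ x, a.1 x + b.1 x + c.1 x ≤ 1 := by
  simp only [Orthogonal, add_apply_of_orthogonal hbc, add_assoc]

theorem orthogonal_add_left_iff {a b c : ContinuousEffect X} (hab : Orthogonal a b) :
    Orthogonal (add a b) c ↔ ∀ x, a.1 x + b.1 x + c.1 x ≤ 1 := by
  simp only [Orthogonal, add_apply_of_orthogonal hab]

theorem orthogonal_seq_left (a : ContinuousEffect X) {b c : ContinuousEffect X}
    (hbc : Orthogonal b c) : Orthogonal (seq a b) (seq a c) := fun x => by
  simp only [seq_apply, ← mul_add]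
  exact mul_le_one₀ (a.le_one x) (add_nonneg (b.nonneg x) (c.nonneg x)) (hbc x)

theorem orthogonal_smul_smul (a : ContinuousEffect X) {r s : ℝ} (hr : 0 ≤ r) (hs : 0 ≤ s)
    (hrs : r + s ≤ 1) : Orthogonal (smul r a) (smul s a) := fun x => by
  rw [smul_apply hr (by linarith), smul_apply hs (by linarith), ← add_mul]
  exact mul_le_one₀ hrs (a.nonneg x) (a.le_one x)

theorem Orthogonal.smul {r : ℝ} {a b : ContinuousEffect X} (hab : Orthogonal a b) (h0 : 0 ≤ r)
    (h1 : r ≤ 1) : Orthogonal (smul r a) (smul r b) := fun x => by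
  rw [smul_apply h0 h1, smul_apply h0 h1, ← mul_add]
  exact mul_le_one₀ h1 (add_nonneg (a.nonneg x) (b.nonneg x)) (hab x)

noncomputable def effectAlgebra : EffectAlgebra (ContinuousEffect X) where
  D := Orthogonal
  add := add
  zero := zero
  one := one
  compl := compl
  D_comm h x := by linarith [h x]
  add_comm' _ := ext fun x => by simp [add_comm]
  D_assoc_left {a b c} hbc habc x := by
    linarith [(orthogonal_add_right_iff hbc).1 habc x, c.nonneg x]
  D_assoc {a b c} hbc habc := by
    have h := (orthogonal_add_right_iff hbc).1 habc
    exact (orthogonal_add_left_iff fun x => by linarith [h x, c.nonneg x]).2 h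
  add_assoc' {a b c} hbc habc := ext fun x => by
    have h := (orthogonal_add_right_iff hbc).1 habc
    have hab : Orthogonal a b := fun y => by linarith [h y, c.nonneg y]
    rw [add_apply_of_orthogonal habc, add_apply_of_orthogonal hbc,
      add_apply_of_orthogonal ((orthogonal_add_left_iff hab).2 h), add_apply_of_orthogonal hab,
      add_assoc]
  D_zero a x := by simpa using a.le_one x
  add_zero' a := ext fun x => by simpa using a.le_one x
  zero_one {a} h := ext fun x => by
    have := h x
    simp only [one_apply, add_le_iff_nonpos_left] at this
    exact this.antisymm (a.nonneg x)
  D_compl a x := by simp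
  add_compl a := ext fun x => by simp
  compl_unique {a b} hab h := ext fun x => by
    have := congrArg (fun e : ContinuousEffect X => e.1 x) h
    simp only [add_apply_of_orthogonal hab, one_apply] at this
    simp only [compl_apply]
    linarith

/-- Pointwise multiplication is commutative, so the commutation axioms hold trivially. -/
noncomputable def sea : SEA (ContinuousEffect X) where
  toEffectAlgebra := effectAlgebra
  seq := seq
  seq_D a hbc := orthogonal_seq_left a hbc
  seq_add a hbc := ext fun x => by
    dsimp only [effectAlgebra]
    rw [seq_apply, add_apply_of_orthogonal hbc,
      add_apply_of_orthogonal (orthogonal_seq_left a hbc), seq_apply, seq_apply, mul_add]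
  one_seq _ := ext fun _ => one_mul _
  seq_orth {a b} h := by rwa [seq_comm]
  seq_compl _ := seq_comm _ _
  seq_assoc _ _ := ext fun _ => (mul_assoc _ _ _).symm
  comm_seq _ _ := seq_comm _ _
  comm_add _ _ _ := seq_comm _ _

noncomputable def convexSEA : ConvexSEA (ContinuousEffect X) where
  toSEA := sea
  smul := smul
  smul_D a hr hs hrs := orthogonal_smul_smul a hr hs hrs
  smul_add_dist {r s} a hr hs hrs := ext fun x => by
    dsimp only [sea, effectAlgebra]
    rw [add_apply_of_orthogonal (orthogonal_smul_smul a hr hs hrs),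
      smul_apply (add_nonneg hr hs) hrs, smul_apply hr (by linarith),
      smul_apply hs (by linarith), add_mul]
  smul_mul {r s} a hr0 hr1 hs0 hs1 := ext fun x => by
    rw [smul_apply (mul_nonneg hr0 hs0) (mul_le_one₀ hr1 hs0 hs1), smul_apply hr0 hr1,
      smul_apply hs0 hs1, mul_assoc]
  zero_smul a := ext fun x => by
    rw [smul_apply le_rfl zero_le_one, zero_mul]
    rfl
  one_smul a := ext fun x => by rw [smul_apply zero_le_one le_rfl, one_mul]
  smul_D_add h0 h1 hab := hab.smul h0 h1
  smul_add {r a b} h0 h1 hab := ext fun x => by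
    dsimp only [sea, effectAlgebra]
    rw [add_apply_of_orthogonal (hab.smul h0 h1), smul_apply h0 h1, add_apply_of_orthogonal hab,
      smul_apply h0 h1, smul_apply h0 h1, mul_add]

section inf

variable (hX : BasicallyDisconnected X)
include hX

noncomputable def inf (f : ℕ → ContinuousEffect X) : ContinuousEffect X :=
  ⟨⟨seqInf (fun n => (f n).1), continuous_seqInf (fun n => (f n).nonneg) hX⟩, fun x =>
    ⟨by simpa using le_seqInf (c := 0) (fun n => (f n).nonneg) x,
      (seqInf_le (fun n => (f n).nonneg) 0 x).trans ((f 0).le_one x)⟩⟩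

theorem inf_le (f : ℕ → ContinuousEffect X) (n : ℕ) (x : X) : (inf hX f).1 x ≤ (f n).1 x :=
  seqInf_le (fun n => (f n).nonneg) n x

theorem le_inf {f : ℕ → ContinuousEffect X} {c : ContinuousEffect X}
    (hc : ∀ n x, c.1 x ≤ (f n).1 x) (x : X) : c.1 x ≤ (inf hX f).1 x :=
  le_seqInf hc x

theorem seq_inf (b : ContinuousEffect X) (f : ℕ → ContinuousEffect X) :
    seq b (inf hX f) = inf hX (fun n => seq b (f n)) := ext fun x =>
  le_antisymm
    (le_inf hX (fun n y => mul_le_mul_of_nonneg_left (inf_le hX f n y) (b.nonneg y)) x)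
    (le_mul_seqInf b.nonneg (fun n y => inf_le hX _ n y) x)

noncomputable def sequentialEffectSpace : SES (ContinuousEffect X) where
  toConvexSEA := convexSEA
  inf := inf hX
  inf_le {f} _ n := pLe_iff.2 (inf_le hX f n)
  le_inf _ _ hc := pLe_iff.2 (le_inf hX fun n => pLe_iff.1 (hc n))
  seq_inf b _ := seq_inf hX b _
  comm_inf _ _ := seq_comm _ _

end inf

end ContinuousEffect

end

theorem continuousFunctions_SES_general (X : Type*) [TopologicalSpace X]
    (hX : BasicallyDisconnected X) :
    ∃ SE : SES {f : C(X, ℝ) // ∀ x, f x ∈ Set.Icc (0 : ℝ) 1},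
      (∀ f g, SE.D f g ↔ ∀ x, f.1 x + g.1 x ≤ 1) ∧
      (∀ f g, SE.D f g → ∀ x, (SE.add f g).1 x = f.1 x + g.1 x) ∧
      (∀ f x, (SE.compl f).1 x = 1 - f.1 x) ∧
      (∀ x, SE.zero.1 x = 0) ∧ (∀ x, SE.one.1 x = 1) ∧
      (∀ (r : ℝ) f x, 0 ≤ r → r ≤ 1 → (SE.smul r f).1 x = r * f.1 x) ∧
      (∀ f g x, (SE.seq f g).1 x = f.1 x * g.1 x) ∧
      (∀ f g, SE.seq f g = SE.seq g f) :=
  ⟨ContinuousEffect.sequentialEffectSpace hX, fun _ _ => Iff.rfl,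
    fun _ _ => ContinuousEffect.add_apply_of_orthogonal, fun _ _ => rfl, fun _ => rfl,
    fun _ => rfl, fun _ _ _ h0 h1 => ContinuousEffect.smul_apply h0 h1 _ _, fun _ _ _ => rfl,
    ContinuousEffect.seq_comm⟩

/-- For a basically disconnected compact Hausdorff space `X`, the continuous functions
`X → [0,1]` form a commutative convex σ-sequential effect algebra under pointwise
operations, with pointwise multiplication as the sequential product. -/
theorem continuousFunctions_SES (X : Type*) [TopologicalSpace X] [CompactSpace X]
    [T2Space X] (hX : BasicallyDisconnected X) :
    ∃ SE : SES {f : C(X, ℝ) // ∀ x, f x ∈ Set.Icc (0 : ℝ) 1},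
      (∀ f g, SE.D f g ↔ ∀ x, f.1 x + g.1 x ≤ 1) ∧
      (∀ f g, SE.D f g → ∀ x, (SE.add f g).1 x = f.1 x + g.1 x) ∧
      (∀ f x, (SE.compl f).1 x = 1 - f.1 x) ∧
      (∀ x, SE.zero.1 x = 0) ∧ (∀ x, SE.one.1 x = 1) ∧
      (∀ (r : ℝ) f x, 0 ≤ r → r ≤ 1 → (SE.smul r f).1 x = r * f.1 x) ∧
      (∀ f g x, (SE.seq f g).1 x = f.1 x * g.1 x) ∧
      (∀ f g, SE.seq f g = SE.seq g f) :=
  continuousFunctions_SES_general X hX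
end

section
/- If X is a basically disconnected compact Hausdorff space, then C(X) is σ-Dedekind complete: every countable family of continuous real-valued functions that is bounded above by a continuous function has a least upper bound in C(X). -/
set_option maxHeartbeats 1600000 in
/-- If `X` is a basically disconnected compact Hausdorff space, then `C(X)` is
σ-Dedekind complete: every countable family of continuous real functions which is
bounded above by a continuous function has a least upper bound in `C(X)`
(for the pointwise order). -/
theorem basicallyDisconnected_sigmaDedekindComplete (X : Type*) [TopologicalSpace X]
    [CompactSpace X] [T2Space X] (hX : BasicallyDisconnected X)
    (f : ℕ → C(X, ℝ)) (g : C(X, ℝ)) (hbdd : ∀ n, f n ≤ g) :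
    ∃ s : C(X, ℝ), IsLUB (Set.range f) s := by
  classical
  have hbx : ∀ x : X, BddAbove (Set.range fun n => f n x) := fun x =>
    ⟨g x, by rintro _ ⟨n, rfl⟩; exact hbdd n x⟩
  set u : X → ℝ := fun x => ⨆ n, f n x with hu
  have hfu : ∀ n x, f n x ≤ u x := fun n x => le_ciSup (hbx x) n
  have hug : ∀ x, u x ≤ g x := fun x => ciSup_le fun n => hbdd n x
  have hlt : ∀ (r : ℝ) (x : X), r < u x ↔ ∃ n, r < f n x := fun r x =>
    lt_ciSup_iff (hbx x)
  -- each superlevel set of u is a cozero set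
  have hcoz : ∀ r : ℝ, ∃ c : C(X, ℝ), {x | r < u x} = c ⁻¹' Set.Ioi 0 := by
    intro r
    set a : ℕ → C(X, ℝ) := fun n =>
      ⟨fun x => min 1 (max (f n x - r) 0),
        continuous_const.min (((f n).continuous.sub continuous_const).max continuous_const)⟩
      with ha
    have ha0 : ∀ n x, 0 ≤ a n x := fun n x => le_min zero_le_one (le_max_right _ _)
    have ha1 : ∀ n x, a n x ≤ 1 := fun n x => min_le_left _ _
    have hsum : Summable (fun n => (2⁻¹ : ℝ) ^ n • a n) := by
      apply Summable.of_norm_bounded (g := fun n => (2⁻¹ : ℝ) ^ n)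
        (summable_geometric_of_lt_one (by norm_num) (by norm_num))
      intro n
      rw [norm_smul ((2⁻¹ : ℝ) ^ n) (a n)]
      have h1 : ‖a n‖ ≤ 1 := by
        rw [ContinuousMap.norm_le _ zero_le_one]
        intro x
        rw [Real.norm_eq_abs, abs_le]
        exact ⟨le_trans (by norm_num) (ha0 n x), ha1 n x⟩
      calc ‖(2⁻¹ : ℝ) ^ n‖ * ‖a n‖ ≤ ‖(2⁻¹ : ℝ) ^ n‖ * 1 :=
            mul_le_mul_of_nonneg_left h1 (norm_nonneg _)
        _ = (2⁻¹ : ℝ) ^ n := by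
            rw [mul_one, Real.norm_eq_abs, abs_pow, abs_of_nonneg (by norm_num : (0:ℝ) ≤ 2⁻¹)]
    have hpt : ∀ x : X, (∑' n, (2⁻¹ : ℝ) ^ n • a n) x = ∑' n, (2⁻¹ : ℝ) ^ n * a n x :=
      fun x => (ContinuousMap.evalCLM ℝ x).map_tsum hsum
    have hsx : ∀ x : X, Summable fun n => (2⁻¹ : ℝ) ^ n * a n x := fun x =>
      hsum.map (ContinuousMap.evalCLM ℝ x).toLinearMap.toAddMonoidHom
        (ContinuousMap.evalCLM ℝ x).continuous
    refine ⟨∑' n, (2⁻¹ : ℝ) ^ n • a n, ?_⟩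
    ext x
    simp only [Set.mem_setOf_eq, Set.mem_preimage, Set.mem_Ioi]
    rw [hlt, hpt]
    constructor
    · rintro ⟨n, hn⟩
      refine Summable.tsum_pos (hsx x) (fun m => mul_nonneg (by positivity) (ha0 m x)) n ?_
      refine mul_pos (by positivity) (lt_min one_pos ?_)
      exact lt_max_of_lt_left (sub_pos.mpr hn)
    · intro hpos
      by_contra hno
      push_neg at hno
      have hz : ∀ n : ℕ, (2⁻¹ : ℝ) ^ n * a n x = 0 := by
        intro n
        have hax : a n x = 0 := by
          show min 1 (max (f n x - r) 0) = 0
          rw [max_eq_right (sub_nonpos.mpr (hno n)), min_eq_right zero_le_one]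
        rw [hax, mul_zero]
      rw [(tsum_congr hz).trans tsum_zero] at hpos
      exact lt_irrefl 0 hpos
  choose c hcz using hcoz
  set K : ℝ → Set X := fun r => closure {x | r < u x} with hK
  have hKopen : ∀ r, IsOpen (K r) := by
    intro r
    have : K r = closure ((c r) ⁻¹' Set.Ioi 0) := by rw [hK]; simp only; rw [hcz r]
    rw [this]; exact hX (c r)
  have hKclosed : ∀ r, IsClosed (K r) := fun r => isClosed_closure
  have hKanti : ∀ {r r' : ℝ}, r ≤ r' → K r' ⊆ K r := fun {r r'} h =>
    closure_mono fun x hx => lt_of_le_of_lt h hx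
  set T : X → Set ℝ := fun x => {r | x ∉ K r} with hT
  have hTup : ∀ (x : X) {r r' : ℝ}, r ∈ T x → r ≤ r' → r' ∈ T x := fun x {r r'} hr hle hmem =>
    hr (hKanti hle hmem)
  have hTne : ∀ x : X, (‖g‖ + 1) ∈ T x := by
    intro x
    have hempty : {y : X | ‖g‖ + 1 < u y} = (∅ : Set X) := by
      ext y
      simp only [Set.mem_setOf_eq, Set.mem_empty_iff_false, iff_false, not_lt]
      calc u y ≤ g y := hug y
        _ ≤ ‖g‖ := (abs_le.mp (g.norm_coe_le_norm y)).2
        _ ≤ ‖g‖ + 1 := by linarith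
    show x ∉ closure {y : X | ‖g‖ + 1 < u y}
    rw [hempty, closure_empty]
    exact Set.notMem_empty x
  have hTbdd : ∀ x : X, BddBelow (T x) := by
    intro x
    refine ⟨-‖f 0‖ - 1, fun r hr => ?_⟩
    by_contra hlt'
    push_neg at hlt'
    have hx : x ∈ K r := by
      apply subset_closure
      show r < u x
      calc r < -‖f 0‖ - 1 := hlt'
        _ ≤ f 0 x := by
            have := (abs_le.mp ((f 0).norm_coe_le_norm x)).1
            linarith
        _ ≤ u x := hfu 0 x
    exact hr hx
  set s0 : X → ℝ := fun x => sInf (T x) with hs0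
  have hus : ∀ x, u x ≤ s0 x := by
    intro x
    refine le_csInf ⟨_, hTne x⟩ fun r hr => ?_
    by_contra hlt'
    push_neg at hlt'
    exact hr (subset_closure hlt')
  have hKle : ∀ (b : C(X, ℝ)), (∀ n, f n ≤ b) → ∀ r x, x ∈ K r → r ≤ b x := by
    intro b hb r x hx
    have hsub : K r ⊆ {y : X | r ≤ b y} := by
      apply closure_minimal
      · intro y hy
        have : u y ≤ b y := ciSup_le fun n => hb n y
        exact le_of_lt (lt_of_lt_of_le hy this)
      · exact isClosed_le continuous_const b.continuous
    exact hsub hx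
  have hsle : ∀ (b : C(X, ℝ)), (∀ n, f n ≤ b) → ∀ x, s0 x ≤ b x := by
    intro b hb x
    by_contra hlt'
    push_neg at hlt'
    set r := (b x + s0 x) / 2 with hr
    have h1 : b x < r := by rw [hr]; linarith
    have h2 : r < s0 x := by rw [hr]; linarith
    have hrT : r ∈ T x := by
      intro hx
      exact absurd (hKle b hb r x hx) (not_le.mpr h1)
    exact absurd (csInf_le (hTbdd x) hrT) (not_le.mpr h2)
  have hcont : Continuous s0 := by
    rw [continuous_iff_continuousAt]
    intro x
    rw [ContinuousAt, Metric.tendsto_nhds]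
    intro ε hε
    obtain ⟨r₁, hr₁T, hr₁lt⟩ :=
      exists_lt_of_csInf_lt (⟨_, hTne x⟩ : (T x).Nonempty)
        (show sInf (T x) < s0 x + ε / 2 by simp only [hs0]; linarith [hε])
    have hW1 : ∀ᶠ y in nhds x, s0 y < s0 x + ε / 2 := by
      have hopen : IsOpen (K r₁)ᶜ := (hKclosed r₁).isOpen_compl
      filter_upwards [hopen.mem_nhds hr₁T] with y hy
      exact lt_of_le_of_lt (csInf_le (hTbdd y) hy) hr₁lt
    have hW2 : ∀ᶠ y in nhds x, s0 x - ε / 2 ≤ s0 y := by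
      set r₂ := s0 x - ε / 2 with hr₂
      have hxK : x ∈ K r₂ := by
        by_contra hxK
        have : s0 x ≤ r₂ := csInf_le (hTbdd x) hxK
        rw [hr₂] at this; linarith [hε]
      filter_upwards [(hKopen r₂).mem_nhds hxK] with y hy
      refine le_csInf ⟨_, hTne y⟩ fun t ht => ?_
      by_contra hlt'
      push_neg at hlt'
      exact hTup y ht (le_of_lt hlt') hy
    filter_upwards [hW1, hW2] with y h1 h2
    rw [Real.dist_eq, abs_sub_lt_iff]
    constructor <;> linarith
  refine ⟨⟨s0, hcont⟩, ?_, ?_⟩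
  · rintro _ ⟨n, rfl⟩
    intro x
    exact le_trans (hfu n x) (hus x)
  · intro b hb
    have hb' : ∀ n, f n ≤ b := fun n => hb ⟨n, rfl⟩
    intro x
    exact hsle b hb' x
end

section
/- Let X be a basically disconnected compact Hausdorff space and a : X → [0,1] continuous. Then a is the uniform limit (and pointwise supremum) of an increasing sequence of functions of the form Σᵢ λᵢ χ_{Sᵢ} with λᵢ > 0 and Sᵢ pairwise disjoint clopen subsets of X. Specifically, the functions q_{2ⁿ}, where q_n := Σ_{k=1}^{n} (1/n) χ_{cl(a⁻¹((k/n,1]))}, form an increasing sequence with ‖a − q_{2ⁿ}‖_∞ ≤ 2^{1−n}. -/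
/-- The approximants `qₙ = Σ_{k=1}^{n} (1/n)·χ_{cl(a⁻¹((k/n,1]))}`. -/
noncomputable def approx {X : Type*} [TopologicalSpace X] (a : C(X, ℝ)) (n : ℕ) (x : X) : ℝ :=
  ∑ k ∈ Finset.Icc 1 n,
    (1 / (n : ℝ)) * (closure (a ⁻¹' Set.Ioi ((k : ℝ) / n))).indicator 1 x

section Helpers

variable {X : Type*} [TopologicalSpace X]

private lemma cl_subset_Ici (a : C(X, ℝ)) (t : ℝ) :
    closure (a ⁻¹' Set.Ioi t) ⊆ a ⁻¹' Set.Ici t :=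
  closure_minimal (Set.preimage_mono Set.Ioi_subset_Ici_self)
    (IsClosed.preimage a.continuous isClosed_Ici)

private lemma cl_anti (a : C(X, ℝ)) {s t : ℝ} (h : s ≤ t) :
    closure (a ⁻¹' Set.Ioi t) ⊆ closure (a ⁻¹' Set.Ioi s) :=
  closure_mono (Set.preimage_mono (Set.Ioi_subset_Ioi h))

private lemma ind_eq_one (a : C(X, ℝ)) {t : ℝ} {x : X} (h : t < a x) :
    (closure (a ⁻¹' Set.Ioi t)).indicator (1 : X → ℝ) x = 1 :=
  Set.indicator_of_mem (subset_closure (show x ∈ a ⁻¹' Set.Ioi t from h)) 1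

private lemma ind_eq_zero (a : C(X, ℝ)) {t : ℝ} {x : X} (h : a x < t) :
    (closure (a ⁻¹' Set.Ioi t)).indicator (1 : X → ℝ) x = 0 := by
  apply Set.indicator_of_notMem
  intro hx
  exact absurd (cl_subset_Ici a t hx) (by simpa using h)

private lemma ind_nonneg (a : C(X, ℝ)) (t : ℝ) (x : X) :
    0 ≤ (closure (a ⁻¹' Set.Ioi t)).indicator (1 : X → ℝ) x :=
  Set.indicator_nonneg (fun _ _ => zero_le_one) x

private lemma ind_le_one (a : C(X, ℝ)) (t : ℝ) (x : X) :
    (closure (a ⁻¹' Set.Ioi t)).indicator (1 : X → ℝ) x ≤ 1 := by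
  by_cases hx : x ∈ closure (a ⁻¹' Set.Ioi t)
  · rw [Set.indicator_of_mem hx]; norm_num
  · rw [Set.indicator_of_notMem hx]; norm_num

private lemma ind_mono (a : C(X, ℝ)) {s t : ℝ} (h : s ≤ t) (x : X) :
    (closure (a ⁻¹' Set.Ioi t)).indicator (1 : X → ℝ) x ≤
      (closure (a ⁻¹' Set.Ioi s)).indicator (1 : X → ℝ) x :=
  Set.indicator_le_indicator_of_subset (cl_anti a h) (fun _ => zero_le_one) x

private lemma cl_clopen (hX : BasicallyDisconnected X) (a : C(X, ℝ)) (t : ℝ) :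
    IsClopen (closure (a ⁻¹' Set.Ioi t)) := by
  refine ⟨isClosed_closure, ?_⟩
  have h : a ⁻¹' Set.Ioi t = (a - ContinuousMap.const X t) ⁻¹' Set.Ioi 0 := by
    ext x
    simp [sub_pos]
  rw [h]
  exact hX _

/-- Pairing a sum over `Icc 1 (2n)` into a sum over `Icc 1 n`. -/
private lemma sum_pair (f : ℕ → ℝ) (n : ℕ) :
    ∑ k ∈ Finset.Icc 1 (2 * n), f k = ∑ k ∈ Finset.Icc 1 n, (f (2 * k - 1) + f (2 * k)) := by
  induction n with
  | zero => simp
  | succ n ih =>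
    rw [Finset.sum_Icc_succ_top (by omega : 1 ≤ n + 1), ← ih]
    have h2 : 2 * (n + 1) = (2 * n + 1) + 1 := by ring
    rw [h2, Finset.sum_Icc_succ_top (by omega), Finset.sum_Icc_succ_top (by omega)]
    simp only [Nat.add_sub_cancel]
    ring

/-- Abel summation for the telescoping rewriting. -/
private lemma abel_sum (u : ℕ → ℝ) (n : ℕ) :
    ∑ i ∈ Finset.range n, ((i : ℝ) + 1) * (u (i + 1) - u (i + 2)) =
      (∑ k ∈ Finset.Icc 1 n, u k) - n * u (n + 1) := by
  induction n with
  | zero => simp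
  | succ n ih =>
    rw [Finset.sum_range_succ, ih, Finset.sum_Icc_succ_top (by omega : 1 ≤ n + 1)]
    push_cast
    ring

/-- The key sandwich bounds: `a x - 2/n ≤ approx a n x ≤ a x`. -/
private lemma approx_sandwich (a : C(X, ℝ)) {n : ℕ} (hn : 1 ≤ n) (x : X)
    (h0 : 0 ≤ a x) (h1 : a x ≤ 1) :
    approx a n x ≤ a x ∧ a x - 2 / n ≤ approx a n x := by
  have hn0 : (0 : ℝ) < n := by exact_mod_cast hn
  set c := ⌊(n : ℝ) * a x⌋₊ with hc
  have hnax0 : 0 ≤ (n : ℝ) * a x := by positivity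
  have hcle : (c : ℝ) ≤ (n : ℝ) * a x := Nat.floor_le hnax0
  have hclt : (n : ℝ) * a x < c + 1 := Nat.lt_floor_add_one _
  constructor
  · -- upper bound
    have key : approx a n x =
        ∑ k ∈ (Finset.Icc 1 n).filter (fun k => k ≤ c),
          (1 / (n : ℝ)) * (closure (a ⁻¹' Set.Ioi ((k : ℝ) / n))).indicator 1 x := by
      rw [approx]
      refine (Finset.sum_filter_of_ne ?_).symm
      intro k _ hk
      by_contra hkc
      apply hk
      have hklt : (n : ℝ) * a x < k := by
        have : c < k := by omega
        calc (n : ℝ) * a x < c + 1 := hclt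
          _ ≤ k := by exact_mod_cast this
      have : a x < (k : ℝ) / n := by
        rw [lt_div_iff₀ hn0]
        linarith [mul_comm (a x) (n : ℝ)]
      rw [ind_eq_zero a this, mul_zero]
    rw [key]
    calc ∑ k ∈ (Finset.Icc 1 n).filter (fun k => k ≤ c),
          (1 / (n : ℝ)) * (closure (a ⁻¹' Set.Ioi ((k : ℝ) / n))).indicator 1 x
        ≤ ∑ _k ∈ (Finset.Icc 1 n).filter (fun k => k ≤ c), (1 / (n : ℝ)) := by
          refine Finset.sum_le_sum fun k _ => ?_
          have := ind_le_one a ((k : ℝ) / n) x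
          have h1n : (0 : ℝ) ≤ 1 / n := by positivity
          nlinarith [ind_nonneg a ((k : ℝ) / n) x]
      _ = ((Finset.Icc 1 n).filter (fun k => k ≤ c)).card * (1 / (n : ℝ)) := by
          rw [Finset.sum_const, nsmul_eq_mul]
      _ ≤ (c : ℝ) * (1 / n) := by
          have hsub : (Finset.Icc 1 n).filter (fun k => k ≤ c) ⊆ Finset.Icc 1 c := by
            intro k hk
            simp only [Finset.mem_filter, Finset.mem_Icc] at hk ⊢
            omega
          have := Finset.card_le_card hsub
          have hcard : (Finset.Icc 1 c).card = c := by
            rw [Nat.card_Icc]; omega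
          have : ((Finset.Icc 1 n).filter (fun k => k ≤ c)).card ≤ c := by omega
          have hcast : (((Finset.Icc 1 n).filter (fun k => k ≤ c)).card : ℝ) ≤ c := by
            exact_mod_cast this
          have h1n : (0 : ℝ) ≤ 1 / n := by positivity
          nlinarith
      _ ≤ a x := by
          rw [mul_one_div, div_le_iff₀ hn0]
          linarith [mul_comm (a x) (n : ℝ)]
  · -- lower bound
    have hcn : c ≤ n := by
      have : (c : ℝ) < n + 1 := by nlinarith
      exact_mod_cast (by exact_mod_cast Nat.lt_succ_iff.mp (by exact_mod_cast this : c < n + 1))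
    have hsubset : Finset.Icc 1 (c - 1) ⊆ Finset.Icc 1 n := by
      apply Finset.Icc_subset_Icc le_rfl
      omega
    have hone : ∀ k ∈ Finset.Icc 1 (c - 1),
        (1 / (n : ℝ)) * (closure (a ⁻¹' Set.Ioi ((k : ℝ) / n))).indicator 1 x = 1 / n := by
      intro k hk
      simp only [Finset.mem_Icc] at hk
      have hkc : k < c := by omega
      have hklt : (k : ℝ) < (n : ℝ) * a x := by
        calc (k : ℝ) < c := by exact_mod_cast hkc
          _ ≤ (n : ℝ) * a x := hcle
      have : (k : ℝ) / n < a x := by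
        rw [div_lt_iff₀ hn0]
        linarith [mul_comm (a x) (n : ℝ)]
      rw [ind_eq_one a this, mul_one]
    have hsum : ∑ k ∈ Finset.Icc 1 (c - 1),
        (1 / (n : ℝ)) * (closure (a ⁻¹' Set.Ioi ((k : ℝ) / n))).indicator 1 x
        = ((c : ℝ) - 1) * (1 / n) ∨ c = 0 := by
      rcases Nat.eq_zero_or_pos c with h | h
      · exact Or.inr h
      · left
        rw [Finset.sum_congr rfl hone, Finset.sum_const, nsmul_eq_mul, Nat.card_Icc]
        have : ((c - 1 + 1 - 1 : ℕ) : ℝ) = (c : ℝ) - 1 := by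
          have : c - 1 + 1 - 1 = c - 1 := by omega
          rw [this, Nat.cast_sub h]
          norm_num
        rw [this]
    have hle : ∑ k ∈ Finset.Icc 1 (c - 1),
        (1 / (n : ℝ)) * (closure (a ⁻¹' Set.Ioi ((k : ℝ) / n))).indicator 1 x ≤ approx a n x := by
      rw [approx]
      refine Finset.sum_le_sum_of_subset_of_nonneg hsubset fun k _ _ => ?_
      have := ind_nonneg a ((k : ℝ) / n) x
      positivity
    rcases hsum with h | h
    · rw [h] at hle
      have : a x - 2 / n ≤ ((c : ℝ) - 1) * (1 / n) := by
        rw [mul_one_div]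
        rw [sub_le_iff_le_add, ← add_div, le_div_iff₀ hn0]
        nlinarith
      linarith
    · -- c = 0 : a x < 1/n so a x - 2/n < 0 ≤ approx
      have hax : (n : ℝ) * a x < 1 := by
        rw [h] at hclt
        simpa using hclt
      have happrox0 : 0 ≤ approx a n x := by
        rw [approx]
        refine Finset.sum_nonneg fun k _ => ?_
        have := ind_nonneg a ((k : ℝ) / n) x
        positivity
      have : a x - 2 / n ≤ 0 := by
        rw [sub_nonpos, le_div_iff₀ hn0]
        nlinarith
      linarith

/-- Doubling monotonicity. -/
private lemma approx_mono_double (a : C(X, ℝ)) {n : ℕ} (hn : 1 ≤ n) (x : X) :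
    approx a n x ≤ approx a (2 * n) x := by
  have hn0 : (0 : ℝ) < n := by exact_mod_cast hn
  rw [approx, approx, sum_pair]
  refine Finset.sum_le_sum fun k hk => ?_
  simp only [Finset.mem_Icc] at hk
  have h2n : ((2 * n : ℕ) : ℝ) = 2 * n := by push_cast; ring
  have hcast1 : ((2 * k - 1 : ℕ) : ℝ) = 2 * k - 1 := by
    have : 1 ≤ 2 * k := by omega
    push_cast [Nat.cast_sub this]
    ring
  have heq : ((2 * k : ℕ) : ℝ) / ((2 * n : ℕ) : ℝ) = (k : ℝ) / n := by
    rw [h2n]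
    push_cast
    rw [mul_div_mul_left _ _ (two_ne_zero)]
  have hle : ((2 * k - 1 : ℕ) : ℝ) / ((2 * n : ℕ) : ℝ) ≤ (k : ℝ) / n := by
    rw [← heq, h2n, hcast1]
    push_cast
    gcongr
    linarith
  have hmono := ind_mono a hle x
  rw [heq]
  have hnn := ind_nonneg a ((k : ℝ) / n) x
  have h2n0 : (0 : ℝ) < ((2 * n : ℕ) : ℝ) := by rw [h2n]; positivity
  have hinv : 1 / ((2 * n : ℕ) : ℝ) = (1 / 2) * (1 / n) := by
    rw [h2n]; field_simp
  rw [hinv]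
  set A := (closure (a ⁻¹' Set.Ioi ((k : ℝ) / n))).indicator (1 : X → ℝ) x with hA
  set B := (closure (a ⁻¹' Set.Ioi (((2 * k - 1 : ℕ) : ℝ) / ((2 * n : ℕ) : ℝ)))).indicator
      (1 : X → ℝ) x with hB
  have h1n : (0 : ℝ) < 1 / n := by positivity
  nlinarith

end Helpers

/-- Spectral approximation in `C(X)` for `X` basically disconnected compact Hausdorff:
every continuous `a : X → [0,1]` is the uniform limit and pointwise supremum of the
increasing sequence `q_{2ⁿ}`, with `‖a − q_{2ⁿ}‖_∞ ≤ 2^{1−n}`, and each `qₙ` is a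
positive combination `Σ λᵢ χ_{Sᵢ}` of pairwise disjoint clopen sets `Sᵢ`. -/
theorem spectral_approximation (X : Type*) [TopologicalSpace X] [CompactSpace X]
    [T2Space X] (hX : BasicallyDisconnected X) (a : C(X, ℝ))
    (ha : ∀ x, a x ∈ Set.Icc (0 : ℝ) 1) :
    (∀ n : ℕ, 1 ≤ n → ∃ (m : ℕ) (lam : Fin m → ℝ) (S : Fin m → Set X),
      (∀ i, 0 < lam i) ∧ (∀ i, IsClopen (S i)) ∧
      (∀ i j, i ≠ j → Disjoint (S i) (S j)) ∧
      (∀ x, approx a n x = ∑ i, lam i * (S i).indicator 1 x)) ∧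
    (∀ n : ℕ, ∀ x, approx a (2 ^ n) x ≤ approx a (2 ^ (n + 1)) x) ∧
    (∀ n : ℕ, ∀ x, |a x - approx a (2 ^ n) x| ≤ 2 * (1 / 2 : ℝ) ^ n) ∧
    (∀ x, IsLUB (Set.range fun n : ℕ => approx a (2 ^ n) x) (a x)) := by
  have hsand : ∀ n : ℕ, 1 ≤ n → ∀ x,
      approx a n x ≤ a x ∧ a x - 2 / n ≤ approx a n x :=
    fun n hn x => approx_sandwich a hn x (ha x).1 (ha x).2
  have hpow : ∀ n : ℕ, 1 ≤ 2 ^ n := fun n => Nat.one_le_two_pow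
  have hbound : ∀ n : ℕ, ∀ x : X, |a x - approx a (2 ^ n) x| ≤ 2 * (1 / 2 : ℝ) ^ n := by
    intro n x
    obtain ⟨hu, hl⟩ := hsand (2 ^ n) (hpow n) x
    have hcast : (2 : ℝ) / ((2 ^ n : ℕ) : ℝ) = 2 * (1 / 2 : ℝ) ^ n := by
      push_cast
      rw [one_div_pow, mul_one_div]
    rw [abs_le]
    constructor
    · have h2 : (0 : ℝ) < 2 * (1 / 2 : ℝ) ^ n := by positivity
      linarith
    · rw [← hcast]
      linarith
  refine ⟨?_, ?_, hbound, ?_⟩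
  · -- decomposition into disjoint clopen sets
    intro n hn
    have hn0 : (0 : ℝ) < n := by exact_mod_cast hn
    set Cl : ℕ → Set X := fun k => closure (a ⁻¹' Set.Ioi ((k : ℝ) / n)) with hCl
    have hClanti : ∀ k l : ℕ, k ≤ l → Cl l ⊆ Cl k := by
      intro k l h
      apply cl_anti
      have hkl : (k : ℝ) ≤ l := by exact_mod_cast h
      gcongr
    refine ⟨n, fun i => ((i : ℕ) + 1 : ℝ) / n, fun i => Cl (i + 1) \ Cl (i + 2), ?_, ?_, ?_, ?_⟩
    · intro i
      positivity
    · intro i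
      exact ((cl_clopen hX a _).diff (cl_clopen hX a _))
    · -- disjointness
      have key : ∀ p q : Fin n, p < q → Disjoint (Cl (p + 1) \ Cl (p + 2)) (Cl (q + 1) \ Cl (q + 2)) := by
        intro p q hpq
        rw [Set.disjoint_left]
        intro x hxp hxq
        exact hxp.2 (hClanti (p + 2) (q + 1) (by omega) hxq.1)
      intro i j hij
      rcases hij.lt_or_gt with h | h
      · exact key i j h
      · exact (key j i h).symm
    · -- sum formula
      intro x
      set u : ℕ → ℝ := fun k => (Cl k).indicator (1 : X → ℝ) x with hu
      have hdiff : ∀ i : Fin n,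
          ((Cl (i + 1) \ Cl (i + 2)).indicator (1 : X → ℝ) x) = u (i + 1) - u (i + 2) := by
        intro i
        have hsub : Cl (i + 2) ⊆ Cl (i + 1) := hClanti _ _ (by omega)
        rw [Set.indicator_sdiff hsub (1 : X → ℝ)]
        simp [hu]
      have hun1 : u (n + 1) = 0 := by
        apply ind_eq_zero
        have : (1 : ℝ) < ((n + 1 : ℕ) : ℝ) / n := by
          rw [lt_div_iff₀ hn0]
          push_cast
          linarith
        calc a x ≤ 1 := (ha x).2
          _ < _ := this
      calc approx a n x = (1 / (n : ℝ)) * ∑ k ∈ Finset.Icc 1 n, u k := by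
            rw [approx, Finset.mul_sum]
        _ = (1 / (n : ℝ)) * ((∑ k ∈ Finset.Icc 1 n, u k) - n * u (n + 1)) := by
            rw [hun1]; ring
        _ = (1 / (n : ℝ)) * ∑ i ∈ Finset.range n, ((i : ℝ) + 1) * (u (i + 1) - u (i + 2)) := by
            rw [abel_sum]
        _ = ∑ i ∈ Finset.range n, ((i : ℝ) + 1) / n * (u (i + 1) - u (i + 2)) := by
            rw [Finset.mul_sum]
            refine Finset.sum_congr rfl fun i _ => ?_
            ring
        _ = ∑ i : Fin n, ((i : ℕ) + 1 : ℝ) / n *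
              ((Cl (i + 1) \ Cl (i + 2)).indicator (1 : X → ℝ) x) := by
            rw [← Fin.sum_univ_eq_sum_range
              (fun i => ((i : ℝ) + 1) / n * (u (i + 1) - u (i + 2))) n]
            refine Finset.sum_congr rfl fun i _ => ?_
            rw [hdiff i]
  · -- monotonicity
    intro n x
    have h : (2 : ℕ) ^ (n + 1) = 2 * 2 ^ n := by ring
    rw [h]
    exact approx_mono_double a (hpow n) x
  · -- IsLUB
    intro x
    constructor
    · rintro _ ⟨n, rfl⟩
      exact (hsand (2 ^ n) (hpow n) x).1
    · intro b hb
      have hineq : ∀ n : ℕ, a x ≤ b + 2 * (1 / 2 : ℝ) ^ n := by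
        intro n
        have h1 := hbound n x
        have h2 : approx a (2 ^ n) x ≤ b := hb ⟨n, rfl⟩
        have h3 := abs_le.mp h1
        linarith [h3.2]
      have htend : Filter.Tendsto (fun n : ℕ => b + 2 * (1 / 2 : ℝ) ^ n)
          Filter.atTop (nhds b) := by
        have h0 : Filter.Tendsto (fun n : ℕ => (1 / 2 : ℝ) ^ n) Filter.atTop (nhds 0) :=
          tendsto_pow_atTop_nhds_zero_of_lt_one (by norm_num) (by norm_num)
        have := (h0.const_mul 2).const_add b
        simpa using this
      exact ge_of_tendsto htend (Filter.Eventually.of_forall hineq)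
end

section
/- Let V be the order unit space associated to a sequential effect space. If a lies in the interior of the positive cone of V (i.e., a ≥ ε·1 for some ε > 0), then a has a multiplicative inverse a⁻¹ ≥ 0 with a ∘ a⁻¹ = a⁻¹ ∘ a = 1, and the left-multiplication map L_a(b) = a ∘ b is an order isomorphism of V with inverse L_{a⁻¹}. Consequently the positive cone of V is homogeneous: for any two interior points a, b there is an order isomorphism Φ of V with Φ(a) = b. -/
/-- The order unit space `V` associated to a sequential effect space, together with
the extension of the sequential product to the positive cone of `V`: `V` is an
Archimedean ordered real vector space with order unit `one`, whose unit interval,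
with the restricted operations, is a sequential effect space (a convex σ-sequential
effect algebra), and `seq` is linear in its second argument and positively
homogeneous in its first. -/
structure OrderUnitSES (V : Type*) [AddCommGroup V] [PartialOrder V] [Module ℝ V] where
  one : V
  seq : V → V → V
  add_le_add : ∀ {a b : V} (c : V), a ≤ b → a + c ≤ b + c
  smul_nonneg : ∀ {r : ℝ} {a : V}, 0 ≤ r → 0 ≤ a → 0 ≤ r • a
  orderUnit : ∀ v : V, ∃ n : ℕ, -((n : ℝ) • one) ≤ v ∧ v ≤ (n : ℝ) • one
  archimedean : ∀ v : V, (∀ n : ℕ, v ≤ (1 / ((n : ℝ) + 1)) • one) → v ≤ 0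
  seq_add : ∀ a b c : V, seq a (b + c) = seq a b + seq a c
  seq_smul : ∀ (r : ℝ) (a b : V), seq a (r • b) = r • seq a b
  seq_homog : ∀ {r : ℝ} (a b : V), 0 ≤ r → seq (r • a) b = r • seq a b
  one_seq : ∀ a : V, seq one a = a
  seq_pos : ∀ {a b : V}, 0 ≤ a → 0 ≤ b → 0 ≤ seq a b
  ses : SES {v : V // 0 ≤ v ∧ v ≤ one}
  ses_D : ∀ a b, ses.D a b ↔ a.1 + b.1 ≤ one
  ses_add : ∀ a b, ses.D a b → (ses.add a b).1 = a.1 + b.1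
  ses_zero : ses.zero.1 = 0
  ses_one : ses.one.1 = one
  ses_compl : ∀ a, (ses.compl a).1 = one - a.1
  ses_smul : ∀ (r : ℝ) (a), 0 ≤ r → r ≤ 1 → (ses.smul r a).1 = r • a.1
  ses_seq : ∀ a b, (ses.seq a b).1 = seq a.1 b.1

section OUSHelpers

variable {V : Type*} [AddCommGroup V] [PartialOrder V] [Module ℝ V] (OU : OrderUnitSES V)
include OU

lemma OUS_le_iff (x y : V) : x ≤ y ↔ 0 ≤ y - x := by
  constructor
  · intro h
    have h2 := OU.add_le_add (-x) h
    simpa [sub_eq_add_neg] using h2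
  · intro h
    have h2 := OU.add_le_add x h
    simpa [sub_add_cancel] using h2

lemma OUS_smul_le_smul {r : ℝ} (hr : 0 ≤ r) {v w : V} (h : v ≤ w) : r • v ≤ r • w := by
  rw [OUS_le_iff OU] at h ⊢
  rw [← smul_sub]
  exact OU.smul_nonneg hr h

lemma OUS_smul_le_smul_right {r s : ℝ} (h : r ≤ s) {v : V} (hv : 0 ≤ v) :
    r • v ≤ s • v := by
  rw [OUS_le_iff OU, ← sub_smul]
  exact OU.smul_nonneg (by linarith) hv

lemma OUS_add_le_add' {a b c d : V} (h1 : a ≤ b) (h2 : c ≤ d) : a + c ≤ b + d := by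
  rw [OUS_le_iff OU] at h1 h2 ⊢
  have h3 : b - a ≤ (d - c) + (b - a) := by
    have h4 := OU.add_le_add (b - a) h2
    simpa using h4
  have h4 : (0:V) ≤ (d - c) + (b - a) := le_trans h1 h3
  have h5 : b + d - (a + c) = (d - c) + (b - a) := by abel
  rw [h5]; exact h4

lemma OUS_sub_le_sub_left {a b : V} (h : a ≤ b) (c : V) : c - b ≤ c - a := by
  rw [OUS_le_iff OU] at h ⊢
  have h5 : (c - a) - (c - b) = b - a := by abel
  rw [h5]; exact h

lemma OUS_one_nonneg : (0:V) ≤ OU.one := by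
  have h := OU.ses.one.2.1
  rwa [OU.ses_one] at h

lemma OUS_seq_zero (a : V) : OU.seq a 0 = 0 := by
  have h := OU.seq_smul 0 a 0
  simpa using h

lemma OUS_zero_seq (a : V) : OU.seq 0 a = 0 := by
  have h := OU.seq_homog (r := 0) (0:V) a le_rfl
  simpa using h

lemma OUS_seq_sub (a x y : V) : OU.seq a (x - y) = OU.seq a x - OU.seq a y := by
  have h1 : x - y = x + (-1 : ℝ) • y := by simp [sub_eq_add_neg]
  rw [h1, OU.seq_add, OU.seq_smul]
  simp [sub_eq_add_neg]

lemma OUS_seq_mono {a x y : V} (ha : 0 ≤ a) (h : x ≤ y) :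
    OU.seq a x ≤ OU.seq a y := by
  rw [OUS_le_iff OU] at h ⊢
  rw [← OUS_seq_sub OU]
  exact OU.seq_pos ha h

lemma OUS_pLe_iff (A B : {v : V // 0 ≤ v ∧ v ≤ OU.one}) :
    pLe OU.ses.D OU.ses.add A B ↔ A.1 ≤ B.1 := by
  constructor
  · rintro ⟨c, hD, hadd⟩
    have h1 := congrArg Subtype.val hadd
    rw [OU.ses_add _ _ hD] at h1
    rw [← h1]
    have h2 : A.1 ≤ A.1 + c.1 := by
      have h := OU.add_le_add A.1 c.2.1
      rwa [zero_add, add_comm c.1 A.1] at h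
    exact h2
  · intro h
    have hc0 : 0 ≤ B.1 - A.1 := (OUS_le_iff OU _ _).mp h
    have hc1 : B.1 - A.1 ≤ OU.one := by
      have h1 : B.1 - A.1 ≤ B.1 - 0 := OUS_sub_le_sub_left OU A.2.1 B.1
      rw [sub_zero] at h1
      exact le_trans h1 B.2.2
    have hab : A.1 + (B.1 - A.1) = B.1 := by abel
    have hD : OU.ses.D A ⟨B.1 - A.1, hc0, hc1⟩ := by
      rw [OU.ses_D]
      show A.1 + (B.1 - A.1) ≤ OU.one
      rw [hab]; exact B.2.2
    refine ⟨_, hD, Subtype.ext ?_⟩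
    rw [OU.ses_add _ _ hD]
    exact hab

lemma OUS_ses_seq_one (A : {v : V // 0 ≤ v ∧ v ≤ OU.one}) :
    OU.ses.seq A OU.ses.one = A := by
  have hz1 : OU.ses.seq A OU.ses.zero = OU.ses.zero := by
    apply Subtype.ext
    rw [OU.ses_seq, OU.ses_zero, OUS_seq_zero OU]
  have hz2 : OU.ses.seq OU.ses.zero A = OU.ses.zero := by
    apply Subtype.ext
    rw [OU.ses_seq, OU.ses_zero, OUS_zero_seq OU]
  have hD : OU.ses.D OU.ses.zero OU.ses.one := by
    rw [OU.ses_D, OU.ses_zero, OU.ses_one]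
    simp
  have hadd : OU.ses.add OU.ses.zero OU.ses.one = OU.ses.one := by
    apply Subtype.ext
    rw [OU.ses_add _ _ hD, OU.ses_zero, zero_add]
  have hcompl : OU.ses.one = OU.ses.compl OU.ses.zero :=
    OU.ses.compl_unique hD hadd
  have hcomm : OU.ses.seq A OU.ses.zero = OU.ses.seq OU.ses.zero A := by
    rw [hz1, hz2]
  have h := OU.ses.seq_compl hcomm
  rw [← hcompl] at h
  rw [h, OU.ses.one_seq]

lemma OUS_seq_one {a : V} (ha : 0 ≤ a) : OU.seq a OU.one = a := by
  obtain ⟨n, _, hn⟩ := OU.orderUnit a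
  have hK0 : (0:ℝ) < (n:ℝ) + 1 := by positivity
  have hKne : ((n:ℝ) + 1) ≠ 0 := ne_of_gt hK0
  have haK : a ≤ ((n:ℝ)+1) • OU.one :=
    le_trans hn (OUS_smul_le_smul_right OU (by linarith) (OUS_one_nonneg OU))
  have hc0 : 0 ≤ ((n:ℝ)+1)⁻¹ • a := OU.smul_nonneg (by positivity) ha
  have hc1 : ((n:ℝ)+1)⁻¹ • a ≤ OU.one := by
    have h := OUS_smul_le_smul OU (le_of_lt (inv_pos.mpr hK0)) haK
    rwa [smul_smul, inv_mul_cancel₀ hKne, one_smul] at h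
  have key : OU.seq (((n:ℝ)+1)⁻¹ • a) OU.one = ((n:ℝ)+1)⁻¹ • a := by
    have h := congrArg Subtype.val (OUS_ses_seq_one OU ⟨((n:ℝ)+1)⁻¹ • a, hc0, hc1⟩)
    rwa [OU.ses_seq, OU.ses_one] at h
  have h := OU.seq_homog (r := (n:ℝ)+1) (((n:ℝ)+1)⁻¹ • a) OU.one hK0.le
  rwa [key, smul_smul, mul_inv_cancel₀ hKne, one_smul] at h

lemma OUS_ext {F : V → V} (hadd : ∀ x y, F (x + y) = F x + F y)
    (hsmul : ∀ (r : ℝ) (x : V), F (r • x) = r • F x)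
    (hint : ∀ c : {v : V // 0 ≤ v ∧ v ≤ OU.one}, F c.1 = c.1) :
    ∀ v, F v = v := by
  have hpos : ∀ w : V, 0 ≤ w → F w = w := by
    intro w hw
    obtain ⟨n, _, hn⟩ := OU.orderUnit w
    have hK0 : (0:ℝ) < (n:ℝ) + 1 := by positivity
    have hKne : ((n:ℝ) + 1) ≠ 0 := ne_of_gt hK0
    have hwK : w ≤ ((n:ℝ)+1) • OU.one :=
      le_trans hn (OUS_smul_le_smul_right OU (by linarith) (OUS_one_nonneg OU))
    have hc1 : ((n:ℝ)+1)⁻¹ • w ≤ OU.one := by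
      have h := OUS_smul_le_smul OU (le_of_lt (inv_pos.mpr hK0)) hwK
      rwa [smul_smul, inv_mul_cancel₀ hKne, one_smul] at h
    have h : F (((n:ℝ)+1)⁻¹ • w) = ((n:ℝ)+1)⁻¹ • w :=
      hint ⟨((n:ℝ)+1)⁻¹ • w, OU.smul_nonneg (by positivity) hw, hc1⟩
    calc F w = F (((n:ℝ)+1) • (((n:ℝ)+1)⁻¹ • w)) := by
          rw [smul_smul, mul_inv_cancel₀ hKne, one_smul]
      _ = ((n:ℝ)+1) • F (((n:ℝ)+1)⁻¹ • w) := hsmul _ _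
      _ = ((n:ℝ)+1) • (((n:ℝ)+1)⁻¹ • w) := by rw [h]
      _ = w := by rw [smul_smul, mul_inv_cancel₀ hKne, one_smul]
  intro v
  obtain ⟨n, hn1, _⟩ := OU.orderUnit v
  have h0 : 0 ≤ v + (n:ℝ) • OU.one := by
    have h := (OUS_le_iff OU _ _).mp hn1
    rwa [sub_neg_eq_add] at h
  have hone : 0 ≤ (n:ℝ) • OU.one := OU.smul_nonneg (by positivity) (OUS_one_nonneg OU)
  have hsub : ∀ x y, F (x - y) = F x - F y := by
    intro x y
    rw [sub_eq_add_neg, hadd, ← neg_one_smul ℝ y, hsmul]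
    simp [sub_eq_add_neg]
  have hv : F ((v + (n:ℝ) • OU.one) - (n:ℝ) • OU.one) = v := by
    rw [hsub, hpos _ h0, hpos _ hone]; abel
  have he : (v + (n:ℝ) • OU.one) - (n:ℝ) • OU.one = v := by abel
  rw [he] at hv
  exact hv

end OUSHelpers
section OUSInverse

variable {V : Type*} [AddCommGroup V] [PartialOrder V] [Module ℝ V] (OU : OrderUnitSES V)

/-- Sequential powers of an effect. -/
def OUSpow (X : {v : V // 0 ≤ v ∧ v ≤ OU.one}) : ℕ → {v : V // 0 ≤ v ∧ v ≤ OU.one}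
  | 0 => OU.ses.one
  | n + 1 => OU.ses.seq X (OUSpow X n)

/-- Partial sums of the values of the sequential powers. -/
def OUSsum (X : {v : V // 0 ≤ v ∧ v ≤ OU.one}) : ℕ → V
  | 0 => 0
  | n + 1 => OUSsum X n + (OUSpow OU X n).1

lemma OUSpow_zero (X) : OUSpow OU X 0 = OU.ses.one := rfl
lemma OUSpow_succ (X) (n : ℕ) : OUSpow OU X (n + 1) = OU.ses.seq X (OUSpow OU X n) := rfl
lemma OUSsum_zero (X) : OUSsum OU X 0 = 0 := rfl
lemma OUSsum_succ (X) (n : ℕ) : OUSsum OU X (n + 1) = OUSsum OU X n + (OUSpow OU X n).1 := rfl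

include OU in
lemma OUS_inverse {a : V} (ε : ℝ) (hε : 0 < ε) (hεa : ε • OU.one ≤ a) :
    ∃ ai : V, 0 ≤ ai ∧ OU.seq a ai = OU.one ∧ OU.seq ai a = OU.one ∧
      ∃ Φ : V ≃ₗ[ℝ] V, (∀ v, Φ v = OU.seq a v) ∧ (∀ v, Φ.symm v = OU.seq ai v) ∧
        (∀ v w : V, v ≤ w ↔ Φ v ≤ Φ w) := by
  have ha0 : 0 ≤ a := le_trans (OU.smul_nonneg hε.le (OUS_one_nonneg OU)) hεa
  obtain ⟨n₀, _, han⟩ := OU.orderUnit a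
  set N : ℝ := (n₀ : ℝ) + 1 with hN
  have hN0 : (0:ℝ) < N := by rw [hN]; positivity
  have hNne : N ≠ 0 := ne_of_gt hN0
  have haN : a ≤ N • OU.one :=
    le_trans han (OUS_smul_le_smul_right OU (by rw [hN]; linarith) (OUS_one_nonneg OU))
  set δ : ℝ := min (ε / N) 1 with hδ
  have hδ0 : (0:ℝ) < δ := by rw [hδ]; exact lt_min (div_pos hε hN0) one_pos
  have hδne : δ ≠ 0 := ne_of_gt hδ0
  have hδ1 : δ ≤ 1 := by rw [hδ]; exact min_le_right _ _
  have hδd : (0:ℝ) ≤ 1 - δ := by linarith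
  have hδd1 : (1:ℝ) - δ < 1 := by linarith
  set u : V := N⁻¹ • a with hu
  have hu1 : u ≤ OU.one := by
    have h := OUS_smul_le_smul OU (inv_nonneg.mpr hN0.le) haN
    rwa [smul_smul, inv_mul_cancel₀ hNne, one_smul, ← hu] at h
  have hδu : δ • OU.one ≤ u := by
    have h1 : δ • OU.one ≤ (ε / N) • OU.one := by
      refine OUS_smul_le_smul_right OU ?_ (OUS_one_nonneg OU)
      rw [hδ]; exact min_le_left _ _
    have h2 : (ε / N) • OU.one ≤ u := by
      have h := OUS_smul_le_smul OU (inv_nonneg.mpr hN0.le) hεa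
      rw [smul_smul, ← hu] at h
      have he : ε / N = N⁻¹ * ε := by ring
      rwa [he]
    exact le_trans h1 h2
  have hu0 : 0 ≤ u := le_trans (OU.smul_nonneg hδ0.le (OUS_one_nonneg OU)) hδu
  set x : V := OU.one - u with hx
  have hx0 : 0 ≤ x := by rw [hx]; exact (OUS_le_iff OU u OU.one).mp hu1
  have hxd : x ≤ (1 - δ) • OU.one := by
    rw [hx]
    calc OU.one - u ≤ OU.one - δ • OU.one := OUS_sub_le_sub_left OU hδu OU.one
    _ = (1 - δ) • OU.one := by rw [sub_smul, one_smul]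
  have hx1 : x ≤ OU.one := by
    refine le_trans hxd ?_
    have h := OUS_smul_le_smul_right OU (show (1-δ:ℝ) ≤ 1 by linarith) (OUS_one_nonneg OU)
    rwa [one_smul] at h
  set X : {v : V // 0 ≤ v ∧ v ≤ OU.one} := ⟨x, hx0, hx1⟩ with hXdef
  have hXv : X.1 = x := rfl
  set U := OU.ses.compl X with hUdef
  have hU : U.1 = u := by
    rw [hUdef, OU.ses_compl, hXv, hx]
    abel
  -- powers and their basic properties
  have hvnn : ∀ n, 0 ≤ (OUSpow OU X n).1 := fun n => (OUSpow OU X n).2.1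
  have hv0 : (OUSpow OU X 0).1 = OU.one := by rw [OUSpow_zero, OU.ses_one]
  have hvS : ∀ n, (OUSpow OU X (n+1)).1 = OU.seq x (OUSpow OU X n).1 := by
    intro n
    rw [OUSpow_succ, OU.ses_seq, hXv]
  have commXp : ∀ n, OU.ses.seq X (OUSpow OU X n) = OU.ses.seq (OUSpow OU X n) X := by
    intro n
    induction n with
    | zero =>
      rw [OUSpow_zero, OUS_ses_seq_one OU X, OU.ses.one_seq]
    | succ k ih =>
      rw [OUSpow_succ]
      exact OU.ses.comm_seq rfl ih
  have commUp : ∀ n, OU.ses.seq U (OUSpow OU X n) = OU.ses.seq (OUSpow OU X n) U := by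
    intro n
    have h := OU.ses.seq_compl (commXp n).symm
    rw [← hUdef] at h
    exact h.symm
  have commval : ∀ n, OU.seq x (OUSpow OU X n).1 = OU.seq (OUSpow OU X n).1 x := by
    intro n
    have h := congrArg Subtype.val (commXp n)
    rwa [OU.ses_seq, OU.ses_seq, hXv] at h
  have commvalU : ∀ n, OU.seq u (OUSpow OU X n).1 = OU.seq (OUSpow OU X n).1 u := by
    intro n
    have h := congrArg Subtype.val (commUp n)
    rwa [OU.ses_seq, OU.ses_seq, hU] at h
  have hux : u = OU.one - x := by rw [hx]; abel
  have hseq_u_v : ∀ n, OU.seq u (OUSpow OU X n).1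
      = (OUSpow OU X n).1 - (OUSpow OU X (n+1)).1 := by
    intro n
    rw [commvalU n, hux, OUS_seq_sub OU, OUS_seq_one OU (hvnn n), ← commval n, ← hvS n]
  have hv_dec : ∀ n, (OUSpow OU X (n+1)).1 ≤ (OUSpow OU X n).1 := by
    intro n
    have hpos : 0 ≤ OU.seq u (OUSpow OU X n).1 := OU.seq_pos hu0 (hvnn n)
    rw [hseq_u_v n] at hpos
    exact (OUS_le_iff OU _ _).mpr hpos
  have hv_bound : ∀ n, (OUSpow OU X n).1 ≤ (1 - δ) ^ n • OU.one := by
    intro n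
    induction n with
    | zero => rw [hv0]; simp
    | succ k ih =>
      rw [hvS k]
      calc OU.seq x (OUSpow OU X k).1 ≤ OU.seq x ((1-δ)^k • OU.one) :=
            OUS_seq_mono OU hx0 ih
      _ = (1-δ)^k • OU.seq x OU.one := OU.seq_smul _ _ _
      _ = (1-δ)^k • x := by rw [OUS_seq_one OU hx0]
      _ ≤ (1-δ)^k • ((1-δ) • OU.one) := OUS_smul_le_smul OU (pow_nonneg hδd k) hxd
      _ = (1-δ)^(k+1) • OU.one := by rw [smul_smul, ← pow_succ]
  -- sums
  have hs_nn : ∀ n, 0 ≤ OUSsum OU X n := by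
    intro n
    induction n with
    | zero => rw [OUSsum_zero]
    | succ k ih =>
      rw [OUSsum_succ]
      have h := OUS_add_le_add' OU ih (hvnn k)
      simpa using h
  have hs_mono : ∀ n, OUSsum OU X n ≤ OUSsum OU X (n+1) := by
    intro n
    rw [OUSsum_succ]
    have h := OUS_add_le_add' OU (le_refl (OUSsum OU X n)) (hvnn n)
    simpa using h
  have hs_bound : ∀ n, δ • OUSsum OU X n ≤ (1 - (1-δ)^n) • OU.one := by
    intro n
    induction n with
    | zero => rw [OUSsum_zero]; simp
    | succ k ih =>
      rw [OUSsum_succ, smul_add]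
      have h2 : δ • (OUSpow OU X k).1 ≤ (δ * (1-δ)^k) • OU.one := by
        calc δ • (OUSpow OU X k).1 ≤ δ • ((1-δ)^k • OU.one) :=
              OUS_smul_le_smul OU hδ0.le (hv_bound k)
        _ = (δ * (1-δ)^k) • OU.one := by rw [smul_smul]
      refine le_trans (OUS_add_le_add' OU ih h2) (le_of_eq ?_)
      rw [← add_smul]
      congr 1
      ring
  have hδs1 : ∀ n, δ • OUSsum OU X n ≤ OU.one := by
    intro n
    refine le_trans (hs_bound n) ?_
    have h1 : (1 - (1-δ)^n : ℝ) ≤ 1 := by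
      have := pow_nonneg hδd n; linarith
    have h := OUS_smul_le_smul_right OU h1 (OUS_one_nonneg OU)
    rwa [one_smul] at h
  have hδs0 : ∀ n, 0 ≤ δ • OUSsum OU X n := fun n => OU.smul_nonneg hδ0.le (hs_nn n)
  set r' : ℕ → {v : V // 0 ≤ v ∧ v ≤ OU.one} :=
    fun n => ⟨δ • OUSsum OU X n, hδs0 n, hδs1 n⟩ with hr'def
  have hr'v : ∀ n, (r' n).1 = δ • OUSsum OU X n := fun n => rfl
  have hDr : ∀ n, OU.ses.D (r' n) (OU.ses.smul δ (OUSpow OU X n)) := by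
    intro n
    rw [OU.ses_D, OU.ses_smul δ _ hδ0.le hδ1, hr'v]
    show δ • OUSsum OU X n + δ • (OUSpow OU X n).1 ≤ OU.one
    rw [← smul_add, ← OUSsum_succ]
    exact hδs1 (n+1)
  have hr'S : ∀ n, r' (n + 1) = OU.ses.add (r' n) (OU.ses.smul δ (OUSpow OU X n)) := by
    intro n
    apply Subtype.ext
    rw [OU.ses_add _ _ (hDr n), OU.ses_smul δ _ hδ0.le hδ1, hr'v, hr'v]
    show δ • OUSsum OU X (n+1) = _
    rw [OUSsum_succ, smul_add]
  have commUsm : ∀ n, OU.ses.seq U (OU.ses.smul δ (OUSpow OU X n))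
      = OU.ses.seq (OU.ses.smul δ (OUSpow OU X n)) U := by
    intro n
    apply Subtype.ext
    rw [OU.ses_seq, OU.ses_seq, OU.ses_smul δ _ hδ0.le hδ1, hU]
    rw [OU.seq_smul, OU.seq_homog _ _ hδ0.le, commvalU n]
  have commUr : ∀ n, OU.ses.seq U (r' n) = OU.ses.seq (r' n) U := by
    intro n
    induction n with
    | zero =>
      apply Subtype.ext
      rw [OU.ses_seq, OU.ses_seq, hU, hr'v]
      rw [OUSsum_zero, smul_zero, OUS_seq_zero OU, OUS_zero_seq OU]
    | succ k ih =>
      rw [hr'S k]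
      exact OU.ses.comm_add ih (commUsm k) (hDr k)
  set fs : ℕ → {v : V // 0 ≤ v ∧ v ≤ OU.one} := fun n => OU.ses.compl (r' n) with hfsdef
  have hfsv : ∀ n, (fs n).1 = OU.one - δ • OUSsum OU X n := by
    intro n
    simp only [hfsdef]
    rw [OU.ses_compl, hr'v]
  have commUf : ∀ n, OU.ses.seq U (fs n) = OU.ses.seq (fs n) U := by
    intro n
    simp only [hfsdef]
    exact OU.ses.seq_compl (commUr n)
  have hf_dec : ∀ n, pLe OU.ses.D OU.ses.add (fs (n+1)) (fs n) := by
    intro n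
    rw [OUS_pLe_iff OU, hfsv, hfsv]
    refine OUS_sub_le_sub_left OU ?_ OU.one
    exact OUS_smul_le_smul OU hδ0.le (hs_mono n)
  set m := OU.ses.inf fs with hmdef
  have hUm : OU.ses.seq U m = OU.ses.inf (fun n => OU.ses.seq U (fs n)) := by
    rw [hmdef]; exact OU.ses.seq_inf U hf_dec
  have commUm : OU.ses.seq U m = OU.ses.seq m U := by
    rw [hmdef]; exact OU.ses.comm_inf hf_dec commUf
  -- value of seq u (s n)
  have hus : ∀ n, OU.seq u (OUSsum OU X n) = OU.one - (OUSpow OU X n).1 := by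
    intro n
    induction n with
    | zero => rw [OUSsum_zero, OUS_seq_zero OU, hv0]; abel
    | succ k ih =>
      rw [OUSsum_succ, OU.seq_add, ih, hseq_u_v k]
      abel
  have hgv : ∀ n, (OU.ses.seq U (fs n)).1
      = (u - δ • OU.one) + δ • (OUSpow OU X n).1 := by
    intro n
    rw [OU.ses_seq, hU, hfsv n, OUS_seq_sub OU, OUS_seq_one OU hu0, OU.seq_smul,
      hus n, smul_sub]
    abel
  have hg_dec : ∀ n, pLe OU.ses.D OU.ses.add (OU.ses.seq U (fs (n+1)))
      (OU.ses.seq U (fs n)) := by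
    intro n
    rw [OUS_pLe_iff OU, hgv, hgv]
    exact OUS_add_le_add' OU (le_refl _) (OUS_smul_le_smul OU hδ0.le (hv_dec n))
  have hc00 : 0 ≤ u - δ • OU.one := (OUS_le_iff OU _ _).mp hδu
  have hc01 : u - δ • OU.one ≤ OU.one := by
    have h1 : u - δ • OU.one ≤ u - 0 :=
      OUS_sub_le_sub_left OU (OU.smul_nonneg hδ0.le (OUS_one_nonneg OU)) u
    rw [sub_zero] at h1
    exact le_trans h1 hu1
  set I : V := (OU.ses.inf (fun n => OU.ses.seq U (fs n))).1 with hI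
  have hlow : u - δ • OU.one ≤ I := by
    have h := OU.ses.le_inf (f := fun n => OU.ses.seq U (fs n)) hg_dec ⟨u - δ • OU.one, hc00, hc01⟩ (fun n => by
      rw [OUS_pLe_iff OU, hgv]
      show u - δ • OU.one ≤ _
      have h1 : 0 ≤ δ • (OUSpow OU X n).1 := OU.smul_nonneg hδ0.le (hvnn n)
      have h2 := OUS_add_le_add' OU (le_refl (u - δ • OU.one)) h1
      simpa using h2)
    rw [OUS_pLe_iff OU] at h
    rw [← hI] at h
    exact h
  have hupp : I ≤ u - δ • OU.one := by
    have hzb : ∀ n, I - (u - δ • OU.one) ≤ (δ * (1-δ)^n) • OU.one := by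
      intro n
      have h1 := OU.ses.inf_le (f := fun n => OU.ses.seq U (fs n)) hg_dec n
      rw [OUS_pLe_iff OU, hgv, ← hI] at h1
      have h2 : I - (u - δ • OU.one) ≤ δ • (OUSpow OU X n).1 := by
        rw [OUS_le_iff OU]
        rw [OUS_le_iff OU] at h1
        have he : δ • (OUSpow OU X n).1 - (I - (u - δ • OU.one))
            = (u - δ • OU.one + δ • (OUSpow OU X n).1) - I := by abel
        rw [he]; exact h1
      refine le_trans h2 ?_
      rw [← smul_smul]
      exact OUS_smul_le_smul OU hδ0.le (hv_bound n)
    have harch : ∀ k : ℕ, I - (u - δ • OU.one) ≤ (1 / ((k:ℝ) + 1)) • OU.one := by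
      intro k
      have hpos : (0:ℝ) < 1 / ((k:ℝ)+1) := by positivity
      obtain ⟨n, hn⟩ := exists_pow_lt_of_lt_one hpos hδd1
      refine le_trans (hzb n) (OUS_smul_le_smul_right OU ?_ (OUS_one_nonneg OU))
      have hb : δ * (1-δ)^n ≤ (1-δ)^n := by nlinarith [pow_nonneg hδd n]
      linarith
    have hz0 : I - (u - δ • OU.one) ≤ 0 := OU.archimedean _ harch
    rw [OUS_le_iff OU]
    have h3 := (OUS_le_iff OU _ _).mp hz0
    have he : (u - δ • OU.one) - I = 0 - (I - (u - δ • OU.one)) := by abel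
    rw [he]; exact h3
  have hval : OU.seq u m.1 = u - δ • OU.one := by
    have h := congrArg Subtype.val hUm
    rw [OU.ses_seq, hU, ← hI] at h
    rw [h]
    exact le_antisymm hupp hlow
  set W := OU.ses.compl m with hWdef
  have hWv : W.1 = OU.one - m.1 := by rw [hWdef, OU.ses_compl]
  have commUW : OU.ses.seq U W = OU.ses.seq W U := by
    rw [hWdef]; exact OU.ses.seq_compl commUm
  have hUW : OU.ses.seq U W = OU.ses.smul δ OU.ses.one := by
    apply Subtype.ext
    rw [OU.ses_seq, OU.ses_smul δ _ hδ0.le hδ1, OU.ses_one, hU, hWv,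
      OUS_seq_sub OU, OUS_seq_one OU hu0, hval]
    abel
  set k : ℝ := δ⁻¹ * N⁻¹ with hk
  have hk0 : (0:ℝ) ≤ k := by
    rw [hk]
    exact mul_nonneg (inv_nonneg.mpr hδ0.le) (inv_nonneg.mpr hN0.le)
  set ai : V := k • W.1 with hai
  have hai0 : 0 ≤ ai := by rw [hai]; exact OU.smul_nonneg hk0 W.2.1
  have haNu : N • u = a := by rw [hu, smul_smul, mul_inv_cancel₀ hNne, one_smul]
  have hseqUW : OU.seq u W.1 = δ • OU.one := by
    have h := congrArg Subtype.val hUW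
    rwa [OU.ses_seq, hU, OU.ses_smul δ _ hδ0.le hδ1, OU.ses_one] at h
  have hseqWU : OU.seq W.1 u = δ • OU.one := by
    have h := congrArg Subtype.val commUW
    rw [OU.ses_seq, OU.ses_seq, hU] at h
    rw [← h]
    exact hseqUW
  have hscal1 : k * N * δ = 1 := by
    rw [hk]; field_simp
  have hscal2 : N * k * δ = 1 := by
    rw [hk]; field_simp
  have h_a_ai : OU.seq a ai = OU.one := by
    rw [hai, OU.seq_smul, ← haNu, OU.seq_homog _ _ hN0.le, hseqUW,
      smul_smul, smul_smul, hscal1, one_smul]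
  have h_ai_a : OU.seq ai a = OU.one := by
    rw [hai, OU.seq_homog _ _ hk0, ← haNu, OU.seq_smul, hseqWU,
      smul_smul, smul_smul, hscal1, one_smul]
  have hassoc1 : ∀ c : {v : V // 0 ≤ v ∧ v ≤ OU.one},
      OU.seq W.1 (OU.seq u c.1) = δ • c.1 := by
    intro c
    have h := OU.ses.seq_assoc commUW.symm c
    rw [← commUW, hUW] at h
    have h2 := congrArg Subtype.val h
    rw [OU.ses_seq, OU.ses_seq, OU.ses_seq, hU,
      OU.ses_smul δ _ hδ0.le hδ1, OU.ses_one,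
      OU.seq_homog _ _ hδ0.le, OU.one_seq] at h2
    exact h2
  have hassoc2 : ∀ c : {v : V // 0 ≤ v ∧ v ≤ OU.one},
      OU.seq u (OU.seq W.1 c.1) = δ • c.1 := by
    intro c
    have h := OU.ses.seq_assoc commUW c
    rw [hUW] at h
    have h2 := congrArg Subtype.val h
    rw [OU.ses_seq, OU.ses_seq, OU.ses_seq, hU,
      OU.ses_smul δ _ hδ0.le hδ1, OU.ses_one,
      OU.seq_homog _ _ hδ0.le, OU.one_seq] at h2
    exact h2
  have hlinv : ∀ v, OU.seq ai (OU.seq a v) = v := by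
    refine OUS_ext OU (F := fun w => OU.seq ai (OU.seq a w)) ?_ ?_ ?_
    · intro y z
      show OU.seq ai (OU.seq a (y + z)) = _
      rw [OU.seq_add, OU.seq_add]
    · intro r y
      show OU.seq ai (OU.seq a (r • y)) = _
      rw [OU.seq_smul, OU.seq_smul]
    · intro c
      show OU.seq ai (OU.seq a c.1) = c.1
      rw [← haNu, OU.seq_homog _ _ hN0.le, OU.seq_smul, hai,
        OU.seq_homog _ _ hk0, hassoc1 c, smul_smul, smul_smul, hscal2, one_smul]
  have hrinv : ∀ v, OU.seq a (OU.seq ai v) = v := by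
    refine OUS_ext OU (F := fun w => OU.seq a (OU.seq ai w)) ?_ ?_ ?_
    · intro y z
      show OU.seq a (OU.seq ai (y + z)) = _
      rw [OU.seq_add, OU.seq_add]
    · intro r y
      show OU.seq a (OU.seq ai (r • y)) = _
      rw [OU.seq_smul, OU.seq_smul]
    · intro c
      show OU.seq a (OU.seq ai c.1) = c.1
      rw [hai, OU.seq_homog _ _ hk0, OU.seq_smul, ← haNu,
        OU.seq_homog _ _ hN0.le, hassoc2 c, smul_smul, smul_smul, hscal1, one_smul]
  refine ⟨ai, hai0, h_a_ai, h_ai_a, ?_⟩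
  refine ⟨{ toFun := fun v => OU.seq a v
            map_add' := OU.seq_add a
            map_smul' := fun r y => OU.seq_smul r a y
            invFun := fun v => OU.seq ai v
            left_inv := hlinv
            right_inv := hrinv }, fun v => rfl, fun v => rfl, ?_⟩
  intro y z
  constructor
  · intro h
    show OU.seq a y ≤ OU.seq a z
    exact OUS_seq_mono OU ha0 h
  · intro h
    have h2 : OU.seq a y ≤ OU.seq a z := h
    have h3 := OUS_seq_mono OU hai0 h2
    rw [hlinv y, hlinv z] at h3
    exact h3

end OUSInverse
/-- In the order unit space `V` associated to a sequential effect space, every element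
`a` of the interior of the positive cone (i.e. `ε·1 ≤ a` for some `ε > 0`) has an
inverse `a⁻¹ ≥ 0` with `a ∘ a⁻¹ = a⁻¹ ∘ a = 1`, and `L_a : b ↦ a ∘ b` is an order
isomorphism of `V` with inverse `L_{a⁻¹}`. Consequently the positive cone is
homogeneous: any two interior points are related by an order isomorphism. -/
theorem orderUnitSES_homogeneous {V : Type*} [AddCommGroup V] [PartialOrder V]
    [Module ℝ V] (OU : OrderUnitSES V) :
    (∀ a : V, (∃ ε : ℝ, 0 < ε ∧ ε • OU.one ≤ a) →
      ∃ ai : V, 0 ≤ ai ∧ OU.seq a ai = OU.one ∧ OU.seq ai a = OU.one ∧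
        ∃ Φ : V ≃ₗ[ℝ] V, (∀ v, Φ v = OU.seq a v) ∧ (∀ v, Φ.symm v = OU.seq ai v) ∧
          (∀ v w : V, v ≤ w ↔ Φ v ≤ Φ w)) ∧
    (∀ a b : V, (∃ ε : ℝ, 0 < ε ∧ ε • OU.one ≤ a) → (∃ ε : ℝ, 0 < ε ∧ ε • OU.one ≤ b) →
      ∃ Φ : V ≃ₗ[ℝ] V, Monotone Φ ∧ Monotone Φ.symm ∧ Φ a = b) := by
  constructor
  · rintro a ⟨ε, hε, hεa⟩
    exact OUS_inverse OU ε hε hεa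
  · rintro a b ⟨ε, hε, hεa⟩ ⟨ε', hε', hεb⟩
    have ha0 : 0 ≤ a := le_trans (OU.smul_nonneg hε.le (OUS_one_nonneg OU)) hεa
    have hb0 : 0 ≤ b := le_trans (OU.smul_nonneg hε'.le (OUS_one_nonneg OU)) hεb
    obtain ⟨ai, hai0, haai, haia, Φa, hΦa, hΦas, hΦaiff⟩ := OUS_inverse OU ε hε hεa
    obtain ⟨bi, hbi0, hbbi, hbib, Φb, hΦb, hΦbs, hΦbiff⟩ := OUS_inverse OU ε' hε' hεb
    refine ⟨Φa.symm.trans Φb, ?_, ?_, ?_⟩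
    · intro y z h
      have h1 : Φa.symm y ≤ Φa.symm z := by
        rw [hΦaiff (Φa.symm y) (Φa.symm z), Φa.apply_symm_apply, Φa.apply_symm_apply]
        exact h
      exact (hΦbiff _ _).mp h1
    · intro y z h
      have h1 : Φb.symm y ≤ Φb.symm z := by
        rw [hΦbiff (Φb.symm y) (Φb.symm z), Φb.apply_symm_apply, Φb.apply_symm_apply]
        exact h
      exact (hΦaiff _ _).mp h1
    · show Φb (Φa.symm a) = b
      have h1 : Φa.symm a = OU.one := by
        rw [hΦas a]
        exact haia
      rw [h1, hΦb OU.one]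
      exact OUS_seq_one OU hb0
end
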